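/- arXiv:1608.02402 — 14 statements merged into one kernel-verified Lean document; each statement's English description precedes it below -/
import Mathlib

section
/- Let M be a finite set, ε ≥ 0, and let v : 2^M → ℝ≥0 be a monotone valuation. Then the following are equivalent: (1) for every item j ∈ M there exists a decreasing function g_j : 2^{M∖{j}} → ℝ≥0 (i.e., g_j(S) ≥ g_j(T) whenever S ⊆ T) such that g_j(S) ≤ v(j | S) ≤ (1+ε)·g_j(S) for all S ⊆ M∖{j}; (2) v is (1+ε)-submodular, i.e., (1+ε)·v(j | S) ≥ v(j | T) for all S ⊆ T ⊆ M and j ∉ T. -/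
/-- For a monotone valuation `v` and `ε ≥ 0`, the following are
equivalent:
(1) for every item `j` there is a decreasing nonnegative function `g` on subsets of
`M ∖ {j}` with `g S ≤ v(j|S) ≤ (1+ε)·g S` for all `S ⊆ M ∖ {j}`
(we encode "`S ⊆ M ∖ {j}`" as `j ∉ S`);
(2) `v` is `(1+ε)`-submodular: `(1+ε)·v(j|S) ≥ v(j|T)` for all `S ⊆ T` and `j ∉ T`. -/
theorem marginal_close_decreasing_iff_one_add_eps_submodular
    {M : Type*} [Fintype M] [DecidableEq M]
    (ε : ℝ) (hε : 0 ≤ ε)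
    (v : Finset M → ℝ)
    (hv : ∀ S : Finset M, 0 ≤ v S)
    (hmono : ∀ S T : Finset M, S ⊆ T → v S ≤ v T) :
    (∀ j : M, ∃ g : Finset M → ℝ,
        (∀ S : Finset M, j ∉ S → 0 ≤ g S) ∧
        (∀ S T : Finset M, j ∉ T → S ⊆ T → g T ≤ g S) ∧
        (∀ S : Finset M, j ∉ S →
          g S ≤ v (insert j S) - v S ∧ v (insert j S) - v S ≤ (1 + ε) * g S))
    ↔
    (∀ S T : Finset M, S ⊆ T → ∀ j : M, j ∉ T →
        (1 + ε) * (v (insert j S) - v S) ≥ v (insert j T) - v T) := by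
  have hpos : (0:ℝ) < 1 + ε := by linarith
  constructor
  · intro h S T hST j hjT
    obtain ⟨g, hg0, hgdec, hgb⟩ := h j
    have hjS : j ∉ S := fun hj => hjT (hST hj)
    have h1 := hgb S hjS
    have h2 := hgb T hjT
    have h3 := hgdec S T hjT hST
    nlinarith [h1.1, h2.2, mul_le_mul_of_nonneg_left h3 hpos.le]
  · intro h j
    classical
    set f : Finset M → ℝ := fun T => v (insert j T) - v T with hf
    refine ⟨fun S => if hS : j ∉ S then
        (1/(1+ε)) * ((Finset.univ.filter (fun T => S ⊆ T ∧ j ∉ T)).sup'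
          ⟨S, by simp [hS]⟩ f) else 0, ?_, ?_, ?_⟩
    · intro S hS
      simp only [dif_pos hS]
      have : (0:ℝ) ≤ (Finset.univ.filter (fun T => S ⊆ T ∧ j ∉ T)).sup' ⟨S, by simp [hS]⟩ f := by
        refine le_trans ?_ (Finset.le_sup' f (by simp [hS] : S ∈ _))
        have := hmono S (insert j S) (Finset.subset_insert j S)
        simp only [hf]; linarith
      positivity
    · intro S T hjT hST
      have hjS : j ∉ S := fun hj => hjT (hST hj)
      simp only [dif_pos hjS, dif_pos hjT]
      apply mul_le_mul_of_nonneg_left _ (by positivity)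
      apply Finset.sup'_le
      intro U hU
      simp only [Finset.mem_filter] at hU
      exact Finset.le_sup' f (by simp [hST.trans hU.2.1, hU.2.2])
    · intro S hS
      simp only [dif_pos hS]
      set A := (Finset.univ.filter (fun T => S ⊆ T ∧ j ∉ T))
      have hSA : S ∈ A := by simp [A, hS]
      have hub : A.sup' ⟨S, hSA⟩ f ≤ (1+ε) * (v (insert j S) - v S) := by
        apply Finset.sup'_le
        intro U hU
        simp only [A, Finset.mem_filter] at hU
        exact h S U hU.2.1 j hU.2.2
      have hlb : v (insert j S) - v S ≤ A.sup' ⟨S, hSA⟩ f := Finset.le_sup' f hSA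
      constructor
      · rw [div_mul_eq_mul_div, one_mul, div_le_iff₀ hpos]
        linarith [hub]
      · rw [mul_comm (1+ε), div_mul_eq_mul_div, one_mul, div_mul_cancel₀ _ hpos.ne']
        exact hlb
end

section
/- Let α ≥ 1 and c ∈ [0,1) and let v : 2^M → ℝ≥0 be a monotone α-submodular valuation with curvature c, meaning v(j | S) ≥ (1−c)·v(j | ∅) for every j ∈ M and S ⊆ M with j ∉ S. Define the linear valuation ℓ(S) := (1−c)·(v(∅) + Σ_{j∈S} v(j | ∅)). Then v is ε-close to ℓ for ε = (α−1+c)/(1−c); that is, ℓ(S) ≤ v(S) ≤ (α/(1−c))·ℓ(S) for every S ⊆ M. -/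
/-! Curvature bounds every marginal gain `v(j | T)` below by `(1 - c)·v(j | ∅)`, and
`α`-submodularity (comparing `T` with `∅`) bounds it above by `α·v(j | ∅)`. Adding up the
marginal gains along any enumeration of `S` gives
`(1 - c)·v(∅) + (1 - c)·Σ v(j | ∅) ≤ v(S) ≤ v(∅) + α·Σ v(j | ∅)`. -/

section MarginalSums

variable {ι β : Type*} [DecidableEq ι] [AddCommGroup β] [PartialOrder β] [IsOrderedAddMonoid β]

theorem add_sum_le_of_le_marginal (f : Finset ι → β) (w : ι → β)
    (h : ∀ j S, j ∉ S → w j ≤ f (insert j S) - f S) (S : Finset ι) :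
    f ∅ + ∑ j ∈ S, w j ≤ f S := by
  induction S using Finset.induction_on with
  | empty => simp
  | @insert j S hj ih =>
    calc f ∅ + ∑ i ∈ insert j S, w i = (f ∅ + ∑ i ∈ S, w i) + w j := by
          rw [Finset.sum_insert hj]; abel
      _ ≤ f S + (f (insert j S) - f S) := add_le_add ih (h j S hj)
      _ = f (insert j S) := add_sub_cancel _ _

theorem le_add_sum_of_marginal_le (f : Finset ι → β) (w : ι → β)
    (h : ∀ j S, j ∉ S → f (insert j S) - f S ≤ w j) (S : Finset ι) :
    f S ≤ f ∅ + ∑ j ∈ S, w j := by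
  have neg_bound := add_sum_le_of_le_marginal (-f) (-w)
    (fun j S hj => by
      rw [Pi.neg_apply, Pi.neg_apply, Pi.neg_apply, neg_sub_neg, neg_le, neg_sub]; exact h j S hj) S
  simp only [Pi.neg_apply, Finset.sum_neg_distrib] at neg_bound
  rwa [← neg_add, neg_le_neg_iff] at neg_bound

end MarginalSums

theorem curvature_close_to_linear_general
    {M : Type*} [DecidableEq M]
    (α c : ℝ) (hα : 1 ≤ α) (hc0 : 0 ≤ c) (hc1 : c < 1)
    (v : Finset M → ℝ)
    (hv : ∀ S : Finset M, 0 ≤ v S)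
    (hsub : ∀ S T : Finset M, S ⊆ T → ∀ j : M, j ∉ T →
      α * (v (insert j S) - v S) ≥ v (insert j T) - v T)
    (hcurv : ∀ (j : M) (S : Finset M), j ∉ S →
      v (insert j S) - v S ≥ (1 - c) * (v {j} - v ∅))
    (ℓ : Finset M → ℝ)
    (hℓ : ∀ S : Finset M, ℓ S = (1 - c) * (v ∅ + ∑ j ∈ S, (v {j} - v ∅)))
    (S : Finset M) :
    ℓ S ≤ v S ∧ v S ≤ (α / (1 - c)) * ℓ S := by
  have lower := add_sum_le_of_le_marginal v (fun j => (1 - c) * (v {j} - v ∅)) hcurv S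
  have upper := le_add_sum_of_marginal_le v (fun j => α * (v {j} - v ∅))
    (fun j T hj => by simpa using hsub ∅ T T.empty_subset j hj) S
  rw [← Finset.mul_sum] at lower upper
  have hv0 := hv ∅
  rw [hℓ, ← mul_assoc, div_mul_cancel₀ α (sub_ne_zero.mpr hc1.ne')]
  constructor <;> nlinarith

/-- Observation: bounded curvature implies closeness to linear.
Let `v` be a monotone `α`-submodular valuation (`α ≥ 1`) with curvature `c ∈ [0,1)`:
`v(j|S) ≥ (1−c)·v(j|∅)` for all `j ∉ S`.  Define the linear valuation
`ℓ(S) = (1−c)·(v(∅) + Σ_{j∈S} v(j|∅))`.  Then `v` is `ε`-close to `ℓ` for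
`ε = (α−1+c)/(1−c)`, i.e. `ℓ(S) ≤ v(S) ≤ (α/(1−c))·ℓ(S)` for every `S`
(note `1 + (α−1+c)/(1−c) = α/(1−c)`). -/
theorem curvature_close_to_linear
    {M : Type*} [Fintype M] [DecidableEq M]
    (α c : ℝ) (hα : 1 ≤ α) (hc0 : 0 ≤ c) (hc1 : c < 1)
    (v : Finset M → ℝ)
    (hv : ∀ S : Finset M, 0 ≤ v S)
    (hmono : ∀ S T : Finset M, S ⊆ T → v S ≤ v T)
    (hsub : ∀ S T : Finset M, S ⊆ T → ∀ j : M, j ∉ T →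
      α * (v (insert j S) - v S) ≥ v (insert j T) - v T)
    (hcurv : ∀ (j : M) (S : Finset M), j ∉ S →
      v (insert j S) - v S ≥ (1 - c) * (v {j} - v ∅))
    (ℓ : Finset M → ℝ)
    (hℓ : ∀ S : Finset M, ℓ S = (1 - c) * (v ∅ + ∑ j ∈ S, (v {j} - v ∅)))
    (S : Finset M) :
    ℓ S ≤ v S ∧ v S ≤ (α / (1 - c)) * ℓ S :=
  curvature_close_to_linear_general α c hα hc0 hc1 v hv hsub hcurv ℓ hℓ S
end

section
/- Let v : 2^M → ℝ≥0 be a monotone α-submodular valuation (α ≥ 1) that is ε-close to a linear valuation ℓ(S) = c + Σ_{j∈S} l_j. Let X = (x_1, …, x_k) be a sequence of distinct items and Z ⊆ M a set disjoint from {x_1,…,x_k}, and write X_j := {x_1, …, x_{j−1}}. Let Y_1, …, Y_k be sets with Y_j ⊆ X_j ∪ Z for every j. Then α·Σ_{j=1}^{k} v(x_j | Y_j) ≥ Σ_{j=1}^{k} l_{x_j} − ε·ℓ(Z). -/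
/-- The prefix `{x_1, …, x_{j-1}}` of a finite sequence `x : Fin k → M`. -/
def prefixSet {M : Type*} [DecidableEq M] {k : ℕ} (x : Fin k → M) (j : Fin k) :
    Finset M :=
  (Finset.univ.filter (fun i : Fin k => i < j)).image x

/-!
Compare every marginal `v(x_j | Y_j)` with the marginal of `x_j` on the larger set
`X_j ∪ Z`: by `α`-submodularity the first, times `α`, dominates the second. The second
marginals telescope to `v(X ∪ Z) − v(Z)`, and `ε`-closeness to `ℓ` bounds this difference
below by `ℓ(X ∪ Z) − (1 + ε)·ℓ(Z) = Σ_j l_{x_j} − ε·ℓ(Z)`.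
-/

open Finset

section Prefix

variable {M : Type*} [DecidableEq M] {k : ℕ} (x : Fin k → M)

/-- `prefixSet` indexed by `n : ℕ`, so that the chain of prefixes can run up to `n = k`. -/
def prefixUpTo (n : ℕ) : Finset M :=
  (univ.filter fun i : Fin k => (i : ℕ) < n).image x

@[simp]
theorem prefixUpTo_zero : prefixUpTo x 0 = ∅ := by
  simp [prefixUpTo]

theorem prefixUpTo_coe (j : Fin k) : prefixUpTo x j = prefixSet x j :=
  rfl

theorem prefixUpTo_succ (j : Fin k) :
    prefixUpTo x (j + 1) = insert (x j) (prefixUpTo x j) := by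
  have : (univ.filter fun i : Fin k => (i : ℕ) < j + 1) =
      insert j (univ.filter fun i : Fin k => (i : ℕ) < j) := by
    ext i
    simp only [mem_filter, mem_insert, mem_univ, true_and, Fin.ext_iff]
    omega
  rw [prefixUpTo, this, image_insert, prefixUpTo]

theorem prefixUpTo_length : prefixUpTo x k = univ.image x := by
  simp [prefixUpTo]

variable {x}

theorem notMem_prefixSet (hx : Function.Injective x) (j : Fin k) : x j ∉ prefixSet x j := by
  simp [prefixSet, hx.eq_iff]

end Prefix

theorem Fin.sum_univ_sub_telescope {G : Type*} [AddCommGroup G] (k : ℕ) (f : ℕ → G) :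
    ∑ j : Fin k, (f (j + 1) - f j) = f k - f 0 := by
  rw [Fin.sum_univ_eq_sum_range (fun n => f (n + 1) - f n) k, sum_range_sub]

theorem sum_marginals_ge_marginal_union {M : Type*} [DecidableEq M] (α : ℝ)
    (v : Finset M → ℝ)
    (hsub : ∀ S T : Finset M, S ⊆ T → ∀ j : M, j ∉ T →
      α * (v (insert j S) - v S) ≥ v (insert j T) - v T)
    {k : ℕ} {x : Fin k → M} (hinj : Function.Injective x)
    {Z : Finset M} (hdisj : ∀ i : Fin k, x i ∉ Z)
    {Y : Fin k → Finset M} (hY : ∀ j : Fin k, Y j ⊆ prefixSet x j ∪ Z) :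
    α * ∑ j : Fin k, (v (insert (x j) (Y j)) - v (Y j)) ≥ v (univ.image x ∪ Z) - v Z := by
  let chain : ℕ → Finset M := fun n => prefixUpTo x n ∪ Z
  have hnotMem (j : Fin k) : x j ∉ chain j := by
    simp only [chain, prefixUpTo_coe, mem_union, not_or]
    exact ⟨notMem_prefixSet hinj j, hdisj j⟩
  have hstep (j : Fin k) :
      α * (v (insert (x j) (Y j)) - v (Y j)) ≥ v (chain (j + 1)) - v (chain j) := by
    rw [show chain (j + 1) = insert (x j) (chain j) by
      simp only [chain, prefixUpTo_succ, insert_union]]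
    exact hsub _ _ (by simpa only [chain, prefixUpTo_coe] using hY j) _ (hnotMem j)
  calc α * ∑ j : Fin k, (v (insert (x j) (Y j)) - v (Y j))
      ≥ ∑ j : Fin k, (v (chain (j + 1)) - v (chain j)) := by
        rw [mul_sum]
        exact sum_le_sum fun j _ => hstep j
    _ = v (univ.image x ∪ Z) - v Z := by
        rw [Fin.sum_univ_sub_telescope k fun n => v (chain n)]
        simp only [chain, prefixUpTo_length, prefixUpTo_zero, empty_union]

theorem sub_ge_linear_sub_error_of_close {M : Type*} [DecidableEq M] (ε c : ℝ)
    (v : Finset M → ℝ) (l : M → ℝ)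
    (ℓ : Finset M → ℝ) (hℓ : ∀ S : Finset M, ℓ S = c + ∑ j ∈ S, l j)
    (hclose : ∀ S : Finset M, ℓ S ≤ v S ∧ v S ≤ (1 + ε) * ℓ S)
    {A Z : Finset M} (hAZ : Disjoint A Z) :
    v (A ∪ Z) - v Z ≥ (∑ j ∈ A, l j) - ε * ℓ Z := by
  have hunion : ℓ (A ∪ Z) = (∑ j ∈ A, l j) + ℓ Z := by
    rw [hℓ, hℓ, sum_union hAZ]
    ring
  linarith [(hclose (A ∪ Z)).1, (hclose Z).2]

theorem sum_marginals_ge_linear_sub_error_general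
    {M : Type*} [DecidableEq M]
    (α ε : ℝ)
    (v : Finset M → ℝ)
    (hsub : ∀ S T : Finset M, S ⊆ T → ∀ j : M, j ∉ T →
      α * (v (insert j S) - v S) ≥ v (insert j T) - v T)
    (c : ℝ) (l : M → ℝ)
    (ℓ : Finset M → ℝ) (hℓ : ∀ S : Finset M, ℓ S = c + ∑ j ∈ S, l j)
    (hclose : ∀ S : Finset M, ℓ S ≤ v S ∧ v S ≤ (1 + ε) * ℓ S)
    (k : ℕ) (x : Fin k → M) (hinj : Function.Injective x)
    (Z : Finset M) (hdisj : ∀ i : Fin k, x i ∉ Z)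
    (Y : Fin k → Finset M)
    (hY : ∀ j : Fin k, Y j ⊆ prefixSet x j ∪ Z) :
    α * ∑ j : Fin k, (v (insert (x j) (Y j)) - v (Y j)) ≥
      (∑ j : Fin k, l (x j)) - ε * ℓ Z := by
  have hXZ : Disjoint (univ.image x) Z := by
    simpa [disjoint_left] using hdisj
  have hlinear := sub_ge_linear_sub_error_of_close ε c v l ℓ hℓ hclose hXZ
  rw [sum_image fun _ _ _ _ h => hinj h] at hlinear
  linarith [sum_marginals_ge_marginal_union α v hsub hinj hdisj hY]

/-- Lemma relating sums of marginals to the linear contribution.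
Let `v` be a monotone `α`-submodular valuation (`α ≥ 1`) that is `ε`-close to the
linear valuation `ℓ(S) = c + Σ_{j∈S} l j`.  Let `x_1, …, x_k` be distinct items,
`Z` disjoint from `{x_1,…,x_k}`, and `Y_j ⊆ X_j ∪ Z` where `X_j = {x_1,…,x_{j−1}}`.
Then `α·Σ_j v(x_j | Y_j) ≥ Σ_j l(x_j) − ε·ℓ(Z)`. -/
theorem sum_marginals_ge_linear_sub_error
    {M : Type*} [Fintype M] [DecidableEq M]
    (α ε : ℝ) (hα : 1 ≤ α) (hε : 0 ≤ ε)
    (v : Finset M → ℝ)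
    (hv : ∀ S : Finset M, 0 ≤ v S)
    (hmono : ∀ S T : Finset M, S ⊆ T → v S ≤ v T)
    (hsub : ∀ S T : Finset M, S ⊆ T → ∀ j : M, j ∉ T →
      α * (v (insert j S) - v S) ≥ v (insert j T) - v T)
    (c : ℝ) (hc : 0 ≤ c) (l : M → ℝ) (hl : ∀ j : M, 0 ≤ l j)
    (ℓ : Finset M → ℝ) (hℓ : ∀ S : Finset M, ℓ S = c + ∑ j ∈ S, l j)
    (hclose : ∀ S : Finset M, ℓ S ≤ v S ∧ v S ≤ (1 + ε) * ℓ S)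
    (k : ℕ) (x : Fin k → M) (hinj : Function.Injective x)
    (Z : Finset M) (hdisj : ∀ i : Fin k, x i ∉ Z)
    (Y : Fin k → Finset M)
    (hY : ∀ j : Fin k, Y j ⊆ prefixSet x j ∪ Z) :
    α * ∑ j : Fin k, (v (insert (x j) (Y j)) - v (Y j)) ≥
      (∑ j : Fin k, l (x j)) - ε * ℓ Z :=
  sum_marginals_ge_linear_sub_error_general α ε v hsub c l ℓ hℓ hclose k x hinj Z hdisj Y hY
end

section
/- Consider a market with finite player set N and item set M, where each valuation ṽ_i : 2^M → ℝ≥0 is ε-close to an additive valuation a_i (a_i(S) = Σ_{j∈S} a_{ij} with a_{ij} ≥ 0). Let σ : M → N assign each item j to a player maximizing ṽ_i({j}), i.e., ṽ_{σ(j)}({j}) ≥ ṽ_i({j}) for all i, and let R_i := σ^{-1}(i). Then Σ_i ṽ_i(R_i) ≥ OPT/(1+ε)^2, where OPT is the maximum of Σ_i ṽ_i(T_i) over all allocations (T_i). -/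
/-!
On singletons, closeness gives `a i j ≤ ṽ_i {j} ≤ ṽ_{σ j} {j} ≤ (1 + ε) a (σ j) j`.
Hence the additive welfare `Σ_j a (σ j) j` of the assignment `σ` dominates, up to a factor
`1 + ε`, the additive welfare of every allocation, and it is itself at most `Σ_i ṽ_i(R_i)`.
Passing from `ṽ_i` to `a_i` on the sets `T_i` costs the second factor `1 + ε`.
-/

open Finset Function

def IsCloseToAdditive {M : Type*} (ε : ℝ) (v : Finset M → ℝ) (a : M → ℝ) : Prop :=
  ∀ S : Finset M, ∑ j ∈ S, a j ≤ v S ∧ v S ≤ (1 + ε) * ∑ j ∈ S, a j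

namespace IsCloseToAdditive

variable {M : Type*} {ε : ℝ} {v w : Finset M → ℝ} {a b : M → ℝ}

lemma sum_le (h : IsCloseToAdditive ε v a) (S : Finset M) : ∑ j ∈ S, a j ≤ v S :=
  (h S).1

lemma le_mul_sum (h : IsCloseToAdditive ε v a) (S : Finset M) :
    v S ≤ (1 + ε) * ∑ j ∈ S, a j :=
  (h S).2

lemma le_mul_of_singleton_le (hv : IsCloseToAdditive ε v a) (hw : IsCloseToAdditive ε w b)
    {j : M} (hj : v {j} ≤ w {j}) : a j ≤ (1 + ε) * b j := by
  simpa using (hv.sum_le {j}).trans (hj.trans (hw.le_mul_sum {j}))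

end IsCloseToAdditive

lemma sum_sum_le_sum_of_pairwise_disjoint {ι α β : Type*} [Fintype ι] [Fintype α]
    [DecidableEq α] [AddCommMonoid β] [PartialOrder β] [IsOrderedAddMonoid β]
    {T : ι → Finset α} (hT : Pairwise (Disjoint on T)) {f : α → β} (hf : ∀ j, 0 ≤ f j) :
    ∑ i, ∑ j ∈ T i, f j ≤ ∑ j, f j := by
  rw [← sum_biUnion (hT.set_pairwise _)]
  exact sum_le_univ_sum_of_nonneg hf

section Welfare

variable {N M : Type*} [Fintype N] [Fintype M]
  {ε : ℝ} {vt : N → Finset M → ℝ} {a : N → M → ℝ} {σ : M → N}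

lemma sum_assigned_weight_le_welfare_fibers [DecidableEq N]
    (hclose : ∀ i, IsCloseToAdditive ε (vt i) (a i)) :
    ∑ j, a (σ j) j ≤ ∑ i, vt i ({j | σ j = i} : Finset M) := by
  rw [← sum_fiberwise univ σ fun j => a (σ j) j]
  gcongr with i
  calc ∑ j ∈ univ with σ j = i, a (σ j) j
      = ∑ j ∈ univ with σ j = i, a i j := sum_congr rfl fun j hj => by rw [(mem_filter.1 hj).2]
    _ ≤ vt i ({j | σ j = i} : Finset M) := (hclose i).sum_le _

lemma welfare_le_sq_mul_sum_assigned_weight [DecidableEq M] (hε : 0 ≤ ε)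
    (ha : ∀ i j, 0 ≤ a i j)
    (hclose : ∀ i, IsCloseToAdditive ε (vt i) (a i))
    (hσ : ∀ (j : M) (i : N), vt i {j} ≤ vt (σ j) {j})
    {T : N → Finset M} (hT : Pairwise (Disjoint on T)) :
    ∑ i, vt i (T i) ≤ (1 + ε) ^ 2 * ∑ j, a (σ j) j := by
  have h1ε : 0 ≤ 1 + ε := by linarith
  calc ∑ i, vt i (T i)
      ≤ ∑ i, (1 + ε) * ∑ j ∈ T i, a i j := sum_le_sum fun i _ => (hclose i).le_mul_sum _
    _ ≤ ∑ i, (1 + ε) * ∑ j ∈ T i, (1 + ε) * a (σ j) j := by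
        gcongr with i _ j
        exact (hclose i).le_mul_of_singleton_le (hclose (σ j)) (hσ j i)
    _ = (1 + ε) ^ 2 * ∑ i, ∑ j ∈ T i, a (σ j) j := by simp only [← mul_sum]; ring
    _ ≤ (1 + ε) ^ 2 * ∑ j, a (σ j) j := by
        gcongr
        exact sum_sum_le_sum_of_pairwise_disjoint hT fun j => ha _ _

end Welfare

theorem close_to_additive_assignment_general
    {N M : Type*} [Fintype N] [Fintype M] [DecidableEq N] [DecidableEq M]
    (ε : ℝ) (hε : 0 ≤ ε)
    (vt : N → Finset M → ℝ)
    (a : N → M → ℝ) (ha : ∀ i j, 0 ≤ a i j)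
    (hclose : ∀ (i : N) (S : Finset M),
      (∑ j ∈ S, a i j) ≤ vt i S ∧ vt i S ≤ (1 + ε) * ∑ j ∈ S, a i j)
    (σ : M → N)
    (hσ : ∀ (j : M) (i : N), vt i {j} ≤ vt (σ j) {j})
    (R : N → Finset M)
    (hR : ∀ i : N, R i = Finset.univ.filter (fun j : M => σ j = i)) :
    ∀ T : N → Finset M, (∀ i i' : N, i ≠ i' → Disjoint (T i) (T i')) →
      ∑ i : N, vt i (R i) ≥ (∑ i : N, vt i (T i)) / (1 + ε) ^ 2 := by
  intro T hT
  obtain rfl : R = fun i => ({j | σ j = i} : Finset M) := funext hR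
  rw [ge_iff_le, div_le_iff₀ (by positivity)]
  calc ∑ i, vt i (T i) ≤ (1 + ε) ^ 2 * ∑ j, a (σ j) j :=
        welfare_le_sq_mul_sum_assigned_weight hε ha hclose hσ hT
    _ ≤ (∑ i, vt i ({j | σ j = i} : Finset M)) * (1 + ε) ^ 2 := by
        rw [mul_comm]
        gcongr
        exact sum_assigned_weight_le_welfare_fibers hclose

/-- Proposition: welfare maximization for valuations close to
additive.  Each `ṽ_i` is `ε`-close to an additive valuation `a_i`.  If `σ`
assigns each item `j` to a player maximizing `ṽ_i({j})` and `R_i = σ⁻¹(i)`,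
then `Σ_i ṽ_i(R_i) ≥ OPT/(1+ε)²`, i.e. the welfare of the allocation `(R_i)`
is within a factor `(1+ε)²` of the welfare of every allocation. -/
theorem close_to_additive_assignment
    {N M : Type*} [Fintype N] [Fintype M] [DecidableEq N] [DecidableEq M]
    (ε : ℝ) (hε : 0 ≤ ε)
    (vt : N → Finset M → ℝ)
    (hvt : ∀ (i : N) (S : Finset M), 0 ≤ vt i S)
    (a : N → M → ℝ) (ha : ∀ i j, 0 ≤ a i j)
    (hclose : ∀ (i : N) (S : Finset M),
      (∑ j ∈ S, a i j) ≤ vt i S ∧ vt i S ≤ (1 + ε) * ∑ j ∈ S, a i j)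
    (σ : M → N)
    (hσ : ∀ (j : M) (i : N), vt i {j} ≤ vt (σ j) {j})
    (R : N → Finset M)
    (hR : ∀ i : N, R i = Finset.univ.filter (fun j : M => σ j = i)) :
    ∀ T : N → Finset M, (∀ i i' : N, i ≠ i' → Disjoint (T i) (T i')) →
      ∑ i : N, vt i (R i) ≥ (∑ i : N, vt i (T i)) / (1 + ε) ^ 2 :=
  close_to_additive_assignment_general ε hε vt a ha hclose σ hσ R hR
end

section
/- Let N, M be finite sets and suppose each valuation ṽ_i : 2^M → ℝ≥0 is monotone and ε-close to a linear valuation ℓ_i. Then there exists a full allocation (S_1, …, S_n) of M (pairwise disjoint sets with union M) such that Σ_i ṽ_i(S_i) ≥ LP(ṽ)/(1+ε), where LP(ṽ) is the configuration LP value for the valuations ṽ; in particular Σ_i ṽ_i(S_i) ≥ OPT(ṽ)/(1+ε). -/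
/-- Feasibility for the configuration LP: `x i S` is the (fractional) weight
with which player `i` receives bundle `S`; weights are nonnegative, each
player's weights sum to `1`, and each item is fractionally allocated at most
once. -/
def ConfigLPFeasible {N M : Type*} [Fintype N] [Fintype M] [DecidableEq M]
    (x : N → Finset M → ℝ) : Prop :=
  (∀ (i : N) (S : Finset M), 0 ≤ x i S) ∧
  (∀ i : N, ∑ S : Finset M, x i S = 1) ∧
  (∀ j : M, ∑ i : N, ∑ S ∈ Finset.univ.filter (fun S : Finset M => j ∈ S), x i S ≤ 1)

/-- The optimal value of the configuration LP for valuations `w`. -/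
noncomputable def configLP {N M : Type*} [Fintype N] [Fintype M] [DecidableEq M]
    (w : N → Finset M → ℝ) : ℝ :=
  sSup {y : ℝ | ∃ x : N → Finset M → ℝ, ConfigLPFeasible x ∧
    y = ∑ i : N, ∑ S : Finset M, x i S * w i S}

/-- The optimal social welfare for valuations `w`: the supremum of
`Σ_i w_i(T_i)` over allocations (families of pairwise disjoint bundles). -/
noncomputable def optWelfare {N M : Type*} [Fintype N] [Fintype M] [DecidableEq M]
    (w : N → Finset M → ℝ) : ℝ :=
  sSup {y : ℝ | ∃ T : N → Finset M,
    (∀ i i' : N, i ≠ i' → Disjoint (T i) (T i')) ∧ y = ∑ i : N, w i (T i)}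

/-!
Give every item `j` to a player `f j` maximising `l i j`. Against linear valuations the
configuration LP collapses: since each player's weights sum to `1`, player `i` contributes
`c i + ∑ j, l i j * (fraction of j given to i)`, so any LP point is worth at most
`∑ i, c i + ∑ j, l (f j) j`, which is exactly the linear value of this allocation.
Closeness costs the factor `1 + ε` once, on the LP side, and allocations are integral LP points,
whence `OPT ≤ LP`.
-/

open Finset

section ConfigLP

variable {N M : Type*} [Fintype N] [Fintype M] [DecidableEq M]

theorem sum_mul_linear_eq {y : Finset M → ℝ} (hy : ∑ S, y S = 1) (c : ℝ) (l : M → ℝ) :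
    ∑ S, y S * (c + ∑ j ∈ S, l j) = c + ∑ j, l j * ∑ S with j ∈ S, y S := by
  simp_rw [mul_add, sum_add_distrib, ← sum_mul, hy, one_mul, mul_sum]
  rw [sum_comm' (s' := fun j => univ.filter (j ∈ ·)) (t' := univ) (by simp)]
  simp_rw [mul_comm]

namespace ConfigLPFeasible

variable {x : N → Finset M → ℝ}

theorem objective_le_mul (hx : ConfigLPFeasible x) {w w' : N → Finset M → ℝ} {k : ℝ}
    (hw : ∀ i S, w i S ≤ k * w' i S) :
    ∑ i, ∑ S, x i S * w i S ≤ k * ∑ i, ∑ S, x i S * w' i S := by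
  simp_rw [mul_sum, mul_left_comm k]
  gcongr with i _ S
  exacts [hx.1 i S, hw i S]

theorem objective_linear_le [DecidableEq N] (hx : ConfigLPFeasible x) (c : N → ℝ)
    {l : N → M → ℝ} (hl : ∀ i j, 0 ≤ l i j) {f : M → N} (hf : ∀ j i, l i j ≤ l (f j) j) :
    ∑ i, ∑ S, x i S * (c i + ∑ j ∈ S, l i j) ≤ ∑ i, (c i + ∑ j with f j = i, l i j) := by
  obtain ⟨hx0, hx1, hx2⟩ := hx
  have hfiber : ∑ i, ∑ j with f j = i, l i j = ∑ j, l (f j) j := by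
    rw [← sum_fiberwise univ f (fun j => l (f j) j)]
    refine sum_congr rfl fun i _ => sum_congr rfl fun j hj => ?_
    rw [(mem_filter.1 hj).2]
  simp_rw [sum_mul_linear_eq (hx1 _), sum_add_distrib, hfiber]
  gcongr
  rw [sum_comm]
  gcongr with j
  calc ∑ i, l i j * ∑ S with j ∈ S, x i S
      ≤ ∑ i, l (f j) j * ∑ S with j ∈ S, x i S := by
        gcongr with i
        exacts [sum_nonneg fun S _ => hx0 i S, hf j i]
    _ = l (f j) j * ∑ i, ∑ S with j ∈ S, x i S := (mul_sum ..).symm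
    _ ≤ l (f j) j := mul_le_of_le_one_right (hl _ _) (hx2 j)

end ConfigLPFeasible

theorem configLPFeasible_ite_eq_of_disjoint {T : N → Finset M}
    (hT : ∀ i i', i ≠ i' → Disjoint (T i) (T i')) :
    ConfigLPFeasible fun i S => if S = T i then (1 : ℝ) else 0 := by
  refine ⟨fun i S => by positivity, fun i => by simp, fun j => ?_⟩
  simp only [sum_ite_eq', mem_filter, mem_univ, true_and]
  rw [sum_boole, Nat.cast_le_one, card_le_one]
  intro a ha b hb
  by_contra hab
  exact disjoint_left.1 (hT a b hab) (mem_filter.1 ha).2 (mem_filter.1 hb).2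

theorem sum_sum_ite_eq_mul (T : N → Finset M) (w : N → Finset M → ℝ) :
    ∑ i, ∑ S, (if S = T i then (1 : ℝ) else 0) * w i S = ∑ i, w i (T i) := by
  simp [ite_mul]

variable {w : N → Finset M → ℝ} {B : ℝ}

theorem optWelfare_le_configLP
    (hB : ∀ x, ConfigLPFeasible x → ∑ i, ∑ S, x i S * w i S ≤ B) :
    optWelfare w ≤ configLP w := by
  refine csSup_le_csSup ⟨B, ?_⟩ ⟨_, fun _ => ∅, by simp, rfl⟩ ?_
  · rintro y ⟨x, hx, rfl⟩
    exact hB x hx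
  · rintro y ⟨T, hT, rfl⟩
    exact ⟨_, configLPFeasible_ite_eq_of_disjoint hT, (sum_sum_ite_eq_mul T w).symm⟩

theorem configLP_le (hB : ∀ x, ConfigLPFeasible x → ∑ i, ∑ S, x i S * w i S ≤ B) :
    configLP w ≤ B := by
  refine csSup_le ⟨_, _, configLPFeasible_ite_eq_of_disjoint (T := fun _ => ∅) (by simp),
    (sum_sum_ite_eq_mul _ w).symm⟩ ?_
  rintro y ⟨x, hx, rfl⟩
  exact hB x hx

end ConfigLP

theorem configLP_rounding_close_to_linear_general
    {N M : Type*} [Fintype N] [Fintype M] [DecidableEq N] [DecidableEq M]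
    [Nonempty N]
    (ε : ℝ) (hε : 0 ≤ ε)
    (vt : N → Finset M → ℝ)
    (c : N → ℝ)
    (l : N → M → ℝ) (hl : ∀ i j, 0 ≤ l i j)
    (ℓ : N → Finset M → ℝ)
    (hℓ : ∀ (i : N) (S : Finset M), ℓ i S = c i + ∑ j ∈ S, l i j)
    (hclose : ∀ (i : N) (S : Finset M),
      ℓ i S ≤ vt i S ∧ vt i S ≤ (1 + ε) * ℓ i S) :
    ∃ S : N → Finset M,
      (∀ i i' : N, i ≠ i' → Disjoint (S i) (S i')) ∧
      (∀ j : M, ∃ i : N, j ∈ S i) ∧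
      (∑ i : N, vt i (S i) ≥ configLP vt / (1 + ε)) ∧
      (∑ i : N, vt i (S i) ≥ optWelfare vt / (1 + ε)) := by
  choose f hf using fun j => Finite.exists_max (l · j)
  set S : N → Finset M := fun i => {j | f j = i}
  have hε₁ : 0 < 1 + ε := by positivity
  have hLP (x) (hx : ConfigLPFeasible x) :
      ∑ i, ∑ T, x i T * vt i T ≤ (1 + ε) * ∑ i, vt i (S i) :=
    calc ∑ i, ∑ T, x i T * vt i T ≤ (1 + ε) * ∑ i, ∑ T, x i T * ℓ i T :=
          hx.objective_le_mul fun i T => (hclose i T).2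
      _ ≤ (1 + ε) * ∑ i, ℓ i (S i) := by
          refine mul_le_mul_of_nonneg_left ?_ hε₁.le
          simpa only [hℓ] using hx.objective_linear_le c hl hf
      _ ≤ (1 + ε) * ∑ i, vt i (S i) := by
          gcongr with i
          exact (hclose i _).1
  refine ⟨S, fun i i' hii' => disjoint_filter.2 fun j _ hj hj' => hii' (hj ▸ hj'),
    fun j => ⟨f j, by simp [S]⟩, ?_, ?_⟩
  · rw [ge_iff_le, div_le_iff₀ hε₁, mul_comm]
    exact configLP_le hLP
  · rw [ge_iff_le, div_le_iff₀ hε₁, mul_comm]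
    exact (optWelfare_le_configLP hLP).trans (configLP_le hLP)

/-- rounding the configuration LP for valuations close to
linear.  If each `ṽ_i` is monotone and `ε`-close to a linear valuation `ℓ_i`,
then there is a full allocation `(S_i)` (pairwise disjoint, covering `M`) with
`Σ_i ṽ_i(S_i) ≥ LP(ṽ)/(1+ε)`, and in particular `Σ_i ṽ_i(S_i) ≥ OPT(ṽ)/(1+ε)`. -/
theorem configLP_rounding_close_to_linear
    {N M : Type*} [Fintype N] [Fintype M] [DecidableEq N] [DecidableEq M]
    [Nonempty N]
    (ε : ℝ) (hε : 0 ≤ ε)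
    (vt : N → Finset M → ℝ)
    (hvt : ∀ (i : N) (S : Finset M), 0 ≤ vt i S)
    (hmono : ∀ (i : N) (S T : Finset M), S ⊆ T → vt i S ≤ vt i T)
    (c : N → ℝ) (hc : ∀ i, 0 ≤ c i)
    (l : N → M → ℝ) (hl : ∀ i j, 0 ≤ l i j)
    (ℓ : N → Finset M → ℝ)
    (hℓ : ∀ (i : N) (S : Finset M), ℓ i S = c i + ∑ j ∈ S, l i j)
    (hclose : ∀ (i : N) (S : Finset M),
      ℓ i S ≤ vt i S ∧ vt i S ≤ (1 + ε) * ℓ i S) :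
    ∃ S : N → Finset M,
      (∀ i i' : N, i ≠ i' → Disjoint (S i) (S i')) ∧
      (∀ j : M, ∃ i : N, j ∈ S i) ∧
      (∑ i : N, vt i (S i) ≥ configLP vt / (1 + ε)) ∧
      (∑ i : N, vt i (S i) ≥ optWelfare vt / (1 + ε)) :=
  configLP_rounding_close_to_linear_general ε hε vt c l hl ℓ hℓ hclose
end

section
/- Approximate first welfare theorem: Let N, M be finite, let each v_i : 2^M → ℝ≥0 be a monotone valuation, let p : M → ℝ≥0 be a price vector, and let 0 < μ ≤ 1. Suppose the full allocation (S_i)_{i∈N} and p form a μ-biased Walrasian equilibrium: there exists μ' ∈ [μ, 1] such that for every allocation (T_i) and every player i, (μ'/μ)·v_i(S_i) − p(S_i) ≥ μ'·v_i(T_i) − p(T_i). Then Σ_i v_i(S_i) ≥ μ·OPT, where OPT is the maximum of Σ_i v_i(T_i) over all allocations (T_i). -/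
/-!
Sum the equilibrium inequalities over all players. Since `S` is full, its bundles pay for
every item, whereas the disjoint bundles of `T` pay for each item at most once; with
nonnegative prices the payments therefore drop out, leaving `(μ'/μ) · W(S) ≥ μ' · W(T)`.
-/

open Finset Function

theorem sum_sum_le_sum_sum_of_forall_exists_mem
    {N M β : Type*} [Fintype N] [DecidableEq M]
    [AddCommMonoid β] [PartialOrder β] [IsOrderedAddMonoid β]
    (p : M → β) (hp : ∀ j, 0 ≤ p j) {S T : N → Finset M}
    (hS : Pairwise (Disjoint on S)) (hT : Pairwise (Disjoint on T))
    (hcover : ∀ j, ∃ i, j ∈ S i) :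
    ∑ i, ∑ j ∈ T i, p j ≤ ∑ i, ∑ j ∈ S i, p j := by
  rw [← sum_biUnion (hT.set_pairwise _), ← sum_biUnion (hS.set_pairwise _)]
  refine sum_le_sum_of_subset_of_nonneg (fun j _ => ?_) fun j _ _ => hp j
  obtain ⟨i, hi⟩ := hcover j
  exact mem_biUnion.2 ⟨i, mem_univ i, hi⟩

theorem mul_sum_le_sum_of_biased_le {ι : Type*} (s : Finset ι) {μ μ' : ℝ}
    (hμ : 0 < μ) (hμ' : 0 < μ') (a b P Q : ι → ℝ)
    (h : ∀ i ∈ s, μ' * b i - Q i ≤ μ' / μ * a i - P i)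
    (hQP : ∑ i ∈ s, Q i ≤ ∑ i ∈ s, P i) :
    μ * ∑ i ∈ s, b i ≤ ∑ i ∈ s, a i := by
  have hsum : μ' * ∑ i ∈ s, b i - ∑ i ∈ s, Q i ≤ μ' / μ * ∑ i ∈ s, a i - ∑ i ∈ s, P i := by
    simpa only [mul_sum, sum_sub_distrib] using sum_le_sum h
  refine le_of_mul_le_mul_left ?_ hμ'
  calc μ' * (μ * ∑ i ∈ s, b i) = μ * (μ' * ∑ i ∈ s, b i) := mul_left_comm _ _ _
    _ ≤ μ * (μ' / μ * ∑ i ∈ s, a i) := mul_le_mul_of_nonneg_left (by linarith) hμ.le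
    _ = μ' * ∑ i ∈ s, a i := by field_simp

theorem approximate_first_welfare_theorem_general
    {N M : Type*} [Fintype N]
    (μ : ℝ) (hμ0 : 0 < μ)
    (v : N → Finset M → ℝ)
    (p : M → ℝ) (hp : ∀ j : M, 0 ≤ p j)
    (S : N → Finset M)
    (hdisj : ∀ i i' : N, i ≠ i' → Disjoint (S i) (S i'))
    (hfull : ∀ j : M, ∃ i : N, j ∈ S i)
    (hbiased : ∃ μ' : ℝ, μ ≤ μ' ∧ μ' ≤ 1 ∧
      ∀ T : N → Finset M, (∀ i i' : N, i ≠ i' → Disjoint (T i) (T i')) →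
        ∀ i : N, (μ' / μ) * v i (S i) - (∑ j ∈ S i, p j) ≥
          μ' * v i (T i) - (∑ j ∈ T i, p j)) :
    ∀ T : N → Finset M, (∀ i i' : N, i ≠ i' → Disjoint (T i) (T i')) →
      ∑ i : N, v i (S i) ≥ μ * ∑ i : N, v i (T i) := by
  classical
  obtain ⟨μ', hμμ', -, hequil⟩ := hbiased
  intro T hT
  exact mul_sum_le_sum_of_biased_le univ hμ0 (hμ0.trans_le hμμ') _ _ _ _
    (fun i _ => hequil T hT i)
    (sum_sum_le_sum_sum_of_forall_exists_mem p hp (fun i i' h => hdisj i i' h)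
      (fun i i' h => hT i i' h) hfull)

/-- Approximate first welfare theorem.  Let `(S_i)` be a
full allocation and `p` a price vector forming a `μ`-biased Walrasian
equilibrium: there is `μ' ∈ [μ, 1]` such that for every allocation `(T_i)` and
every player `i`, `(μ'/μ)·v_i(S_i) − p(S_i) ≥ μ'·v_i(T_i) − p(T_i)`.  Then the
welfare `Σ_i v_i(S_i)` is at least `μ` times the welfare of every allocation. -/
theorem approximate_first_welfare_theorem
    {N M : Type*} [Fintype N] [Fintype M] [DecidableEq M]
    (μ : ℝ) (hμ0 : 0 < μ) (hμ1 : μ ≤ 1)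
    (v : N → Finset M → ℝ)
    (hv : ∀ (i : N) (S : Finset M), 0 ≤ v i S)
    (hmono : ∀ (i : N) (S T : Finset M), S ⊆ T → v i S ≤ v i T)
    (p : M → ℝ) (hp : ∀ j : M, 0 ≤ p j)
    (S : N → Finset M)
    (hdisj : ∀ i i' : N, i ≠ i' → Disjoint (S i) (S i'))
    (hfull : ∀ j : M, ∃ i : N, j ∈ S i)
    (hbiased : ∃ μ' : ℝ, μ ≤ μ' ∧ μ' ≤ 1 ∧
      ∀ T : N → Finset M, (∀ i i' : N, i ≠ i' → Disjoint (T i) (T i')) →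
        ∀ i : N, (μ' / μ) * v i (S i) - (∑ j ∈ S i, p j) ≥
          μ' * v i (T i) - (∑ j ∈ T i, p j)) :
    ∀ T : N → Finset M, (∀ i i' : N, i ≠ i' → Disjoint (T i) (T i')) →
      ∑ i : N, v i (S i) ≥ μ * ∑ i : N, v i (T i) :=
  approximate_first_welfare_theorem_general μ hμ0 v p hp S hdisj hfull hbiased
end

section
/- Let v : 2^M → ℝ≥0 be a monotone α-submodular valuation (α ≥ 1) that is ε-close to a linear valuation ℓ(S) = c + Σ_{j∈S} l_j, and let p : M → ℝ≥0 be a price vector. Suppose B ⊆ S ⊆ M satisfy: (i) α·(v(B'') − v(∅)) ≥ p(B'') for every B'' ⊆ B; and (ii) v(S) − p(S) ≥ v(B ∪ X) − p(B ∪ X) for every X ⊆ M. Then for every bundle T ⊆ M: v(S) − p(S) ≥ ℓ(T) − p(T) − (2ε + α − 1)·v(S). -/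
/-!
Put `A := B \ T`. Optimality of `S` against `B ∪ T` together with `ℓ ≤ v` gives
`v(S) − p(S) ≥ ℓ(T) − p(T) + (l(A) − p(A))`. Individual rationality on `A` bounds the overpayment
`p(A) − l(A)` by `α(v(A) − v(∅)) − l(A)`, and since `c ≤ v(∅)` and `(1 − ε)·v(A) ≤ ℓ(A) = c + l(A)`,
this is at most `(α − 1 + ε)·v(A) ≤ (2ε + α − 1)·v(S)`.
-/

open Finset

def IsEpsClose {M : Type*} (ε : ℝ) (v ℓ : Finset M → ℝ) : Prop :=
  ∀ S, ℓ S ≤ v S ∧ v S ≤ (1 + ε) * ℓ S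

namespace IsEpsClose

variable {M : Type*} {ε : ℝ} {v ℓ : Finset M → ℝ}

theorem one_sub_mul_le (h : IsEpsClose ε v ℓ) (hε : 0 ≤ ε) (S : Finset M) :
    (1 - ε) * v S ≤ ℓ S := by
  obtain ⟨hlow, hup⟩ := h S
  linarith [mul_le_mul_of_nonneg_left hlow hε]

theorem sum_le_sum_add_mul_of_individuallyRational [DecidableEq M] (h : IsEpsClose ε v ℓ)
    {α c : ℝ} {l p : M → ℝ} (hα : 1 ≤ α) (hε : 0 ≤ ε) (hv : 0 ≤ v ∅)
    (hℓ : ∀ S, ℓ S = c + ∑ j ∈ S, l j) {A : Finset M}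
    (hIR : α * (v A - v ∅) ≥ ∑ j ∈ A, p j) :
    ∑ j ∈ A, p j ≤ ∑ j ∈ A, l j + (α - 1 + ε) * v A := by
  have hc : c ≤ v ∅ := by simpa [hℓ] using (h ∅).1
  have hA : (1 - ε) * v A ≤ c + ∑ j ∈ A, l j := hℓ A ▸ h.one_sub_mul_le hε A
  have hαv : v ∅ ≤ α * v ∅ := le_mul_of_one_le_left hv hα
  linarith

end IsEpsClose

theorem sum_union_eq_sum_add_sum_sdiff {M : Type*} [DecidableEq M] (f : M → ℝ)
    (B T : Finset M) : ∑ j ∈ B ∪ T, f j = ∑ j ∈ T, f j + ∑ j ∈ B \ T, f j := by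
  rw [← sum_sdiff (subset_union_right (s₁ := B)), union_sdiff_right, add_comm]

theorem kelso_crawford_single_player_linear_general
    {M : Type*} [DecidableEq M]
    (α ε : ℝ) (hα : 1 ≤ α) (hε : 0 ≤ ε)
    (v : Finset M → ℝ)
    (hv : ∀ S : Finset M, 0 ≤ v S)
    (hmono : ∀ S T : Finset M, S ⊆ T → v S ≤ v T)
    (c : ℝ) (l : M → ℝ)
    (ℓ : Finset M → ℝ) (hℓ : ∀ S : Finset M, ℓ S = c + ∑ j ∈ S, l j)
    (hclose : ∀ S : Finset M, ℓ S ≤ v S ∧ v S ≤ (1 + ε) * ℓ S)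
    (p : M → ℝ)
    (B S : Finset M) (hBS : B ⊆ S)
    (hIR : ∀ B'' : Finset M, B'' ⊆ B → α * (v B'' - v ∅) ≥ ∑ j ∈ B'', p j)
    (hopt : ∀ X : Finset M,
      v S - (∑ j ∈ S, p j) ≥ v (B ∪ X) - ∑ j ∈ B ∪ X, p j)
    (T : Finset M) :
    v S - (∑ j ∈ S, p j) ≥
      ℓ T - (∑ j ∈ T, p j) - (2 * ε + α - 1) * v S := by
  have hover := IsEpsClose.sum_le_sum_add_mul_of_individuallyRational hclose hα hε (hv ∅) hℓ
    (hIR (B \ T) sdiff_subset)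
  have hvA : v (B \ T) ≤ v S := hmono _ _ (sdiff_subset.trans hBS)
  have hℓBT : ℓ (B ∪ T) = ℓ T + ∑ j ∈ B \ T, l j := by
    rw [hℓ, hℓ, sum_union_eq_sum_add_sum_sdiff]; ring
  have hpBT := sum_union_eq_sum_add_sum_sdiff p B T
  have hslack : (α - 1 + ε) * v (B \ T) ≤ (2 * ε + α - 1) * v S := by
    linarith [mul_le_mul_of_nonneg_left hvA (by linarith : (0 : ℝ) ≤ α - 1 + ε),
      mul_nonneg hε (hv S)]
  linarith [hopt T, (hclose (B ∪ T)).1]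

/-- key inequality in the analysis of Kelso–Crawford for
`α`-submodular, `ε`-close-to-linear valuations.  Let `v` be a monotone
`α`-submodular valuation (`α ≥ 1`) that is `ε`-close to the linear valuation
`ℓ(S) = c + Σ_{j∈S} l j`, and let `p` be a price vector.  Suppose `B ⊆ S`
satisfy: (i) `α·(v(B'') − v(∅)) ≥ p(B'')` for every `B'' ⊆ B`, and
(ii) `v(S) − p(S) ≥ v(B ∪ X) − p(B ∪ X)` for every `X ⊆ M`.  Then for every
bundle `T`: `v(S) − p(S) ≥ ℓ(T) − p(T) − (2ε + α − 1)·v(S)`. -/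
theorem kelso_crawford_single_player_linear
    {M : Type*} [Fintype M] [DecidableEq M]
    (α ε : ℝ) (hα : 1 ≤ α) (hε : 0 ≤ ε)
    (v : Finset M → ℝ)
    (hv : ∀ S : Finset M, 0 ≤ v S)
    (hmono : ∀ S T : Finset M, S ⊆ T → v S ≤ v T)
    (hsub : ∀ S T : Finset M, S ⊆ T → ∀ j : M, j ∉ T →
      α * (v (insert j S) - v S) ≥ v (insert j T) - v T)
    (c : ℝ) (hc : 0 ≤ c) (l : M → ℝ) (hl : ∀ j : M, 0 ≤ l j)
    (ℓ : Finset M → ℝ) (hℓ : ∀ S : Finset M, ℓ S = c + ∑ j ∈ S, l j)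
    (hclose : ∀ S : Finset M, ℓ S ≤ v S ∧ v S ≤ (1 + ε) * ℓ S)
    (p : M → ℝ) (hp : ∀ j : M, 0 ≤ p j)
    (B S : Finset M) (hBS : B ⊆ S)
    (hIR : ∀ B'' : Finset M, B'' ⊆ B → α * (v B'' - v ∅) ≥ ∑ j ∈ B'', p j)
    (hopt : ∀ X : Finset M,
      v S - (∑ j ∈ S, p j) ≥ v (B ∪ X) - ∑ j ∈ B ∪ X, p j)
    (T : Finset M) :
    v S - (∑ j ∈ S, p j) ≥
      ℓ T - (∑ j ∈ T, p j) - (2 * ε + α - 1) * v S :=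
  kelso_crawford_single_player_linear_general α ε hα hε v hv hmono c l ℓ hℓ hclose p B S hBS hIR
    hopt T
end

section
/- Consider a market with finite player set N and item set M, where each valuation v_i : 2^M → ℝ≥0 is monotone, α-submodular (α ≥ 1), and ε-close to a linear valuation ℓ_i. Let p : M → ℝ≥0 and let (S_i)_{i∈N} be a full allocation of M such that for each player i there is B_i ⊆ S_i with: (i) α·(v_i(B'') − v_i(∅)) ≥ p(B'') for every B'' ⊆ B_i; and (ii) v_i(S_i) − p(S_i) ≥ v_i(B_i ∪ X) − p(B_i ∪ X) for every X ⊆ M. Then Σ_i v_i(S_i) ≥ OPT / ((1+ε)·(α + 2ε)), where OPT is the maximum of Σ_i v_i(T_i) over all allocations (T_i). -/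
/-!
Compare the welfare of `(S_i)` with that of any allocation `(T_i)` through the linear
approximations `ℓ_i`. For a single player, optimality of `S_i` over supersets of `B_i` bounds the
linear value of the extra items `T_i \ S_i` by their price plus the slack `v_i(S_i) − ℓ_i(S_i)`,
while the items `S_i \ T_i` given up are paid for either through individual rationality (those in
`B_i`) or through the utility lost by dropping them (the others); together this gives
`ℓ_i(T_i) + p(S_i \ T_i) ≤ (α + 2ε)·v_i(S_i) + p(T_i \ S_i)`. Summed over the players, the price
terms cancel in our favour because every item of `T_i \ S_i` lies in some `S_{i'} \ T_{i'}`, and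
`v_i ≤ (1 + ε)·ℓ_i` finishes the proof.
-/

open Finset Function

theorem mul_le_of_close_to_linear {α ε c d L s t : ℝ} (hα : 1 ≤ α) (hε : 0 ≤ ε) (hc : 0 ≤ c)
    (hd : 0 ≤ d) (hcd : c + d ≤ L) (hLs : L ≤ s) (hsL : s ≤ (1 + ε) * L) (hts : t ≤ s - c)
    (htd : t ≤ ε * c + (1 + ε) * d) :
    α * t ≤ (α + 2 * ε - 2) * s + L + d := by
  -- Split `α * t = (α - k) * t + k * t`, bound the two parts by `hts` and `htd`, and take
  -- `k = 0` if `1 ≤ ε`, otherwise `k = min α (2 - 2ε)`.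
  rcases le_total 1 ε with hε1 | hε1
  · nlinarith [mul_le_mul_of_nonneg_left hts (by linarith : 0 ≤ α),
      mul_nonneg (sub_nonneg.2 hε1) (by linarith : 0 ≤ s), mul_nonneg (by linarith : 0 ≤ α) hc]
  rcases le_total (2 - 2 * ε) α with hk | hk
  · nlinarith [mul_le_mul_of_nonneg_left hts (sub_nonneg.2 hk),
      mul_le_mul_of_nonneg_left htd (by linarith : 0 ≤ 2 - 2 * ε),
      mul_nonneg (sub_nonneg.2 hα) hc, mul_nonneg (mul_nonneg hε hε) hc,
      mul_nonneg (mul_nonneg hε hε) hd]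
  · have hm : 0 ≤ 1 - (2 - α - 2 * ε) * (1 + ε) := by nlinarith
    nlinarith [mul_le_mul_of_nonneg_left htd (by linarith : 0 ≤ α),
      mul_le_mul_of_nonneg_left hsL (by linarith : 0 ≤ 2 - α - 2 * ε),
      mul_nonneg hm (sub_nonneg.2 hcd), mul_nonneg (sub_nonneg.2 hα) hc,
      mul_nonneg (mul_nonneg hε hε) hc, mul_nonneg (mul_nonneg hε hε) hd]

section Player

variable {M : Type*} [DecidableEq M] {v : Finset M → ℝ} {p l : M → ℝ} {α ε c : ℝ}
  {S B T : Finset M}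

theorem utility_le_of_superset (hopt : ∀ X, v (B ∪ X) - ∑ j ∈ B ∪ X, p j ≤ v S - ∑ j ∈ S, p j)
    {Y : Finset M} (hY : B ⊆ Y) : v Y - ∑ j ∈ Y, p j ≤ v S - ∑ j ∈ S, p j :=
  union_eq_right.2 hY ▸ hopt Y

theorem sub_le_sum_price_sdiff (hopt : ∀ X, v (B ∪ X) - ∑ j ∈ B ∪ X, p j ≤ v S - ∑ j ∈ S, p j)
    (hBS : B ⊆ S) : v (S ∪ T) - v S ≤ ∑ j ∈ T \ S, p j := by
  have hutil := utility_le_of_superset hopt (hBS.trans (subset_union_left (s₂ := T)))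
  have hsplit := sum_sdiff (f := p) (subset_union_left : S ⊆ S ∪ T)
  rw [union_sdiff_left] at hsplit
  linarith

theorem sum_price_le_sub_sdiff (hopt : ∀ X, v (B ∪ X) - ∑ j ∈ B ∪ X, p j ≤ v S - ∑ j ∈ S, p j)
    {W : Finset M} (hWS : W ⊆ S) (hB : B ⊆ S \ W) : ∑ j ∈ W, p j ≤ v S - v (S \ W) := by
  have hutil := utility_le_of_superset hopt hB
  have hsplit := sum_sdiff (f := p) hWS
  linarith

theorem retained_add_sum_price_le (hα : 1 ≤ α) (hε : 0 ≤ ε) (hc : 0 ≤ c) (hl : ∀ j, 0 ≤ l j)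
    (hlow : ∀ X, c + ∑ j ∈ X, l j ≤ v X) (hup : ∀ X, v X ≤ (1 + ε) * (c + ∑ j ∈ X, l j))
    (hmono : Monotone v) (hBS : B ⊆ S) (hIR : ∀ B' ⊆ B, ∑ j ∈ B', p j ≤ α * (v B' - v ∅))
    (hopt : ∀ X, v (B ∪ X) - ∑ j ∈ B ∪ X, p j ≤ v S - ∑ j ∈ S, p j) :
    c + ∑ j ∈ S ∩ T, l j + (v S - (c + ∑ j ∈ S, l j)) + ∑ j ∈ S \ T, p j
      ≤ (α + 2 * ε) * v S := by
  set D := (S \ T) ∩ B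
  set W := (S \ T) \ B
  have hpD : ∑ j ∈ D, p j ≤ α * (v D - v ∅) := hIR D inter_subset_right
  have hpW : ∑ j ∈ W, p j ≤ v S - v (S \ W) :=
    sum_price_le_sub_sdiff hopt (sdiff_subset.trans sdiff_subset)
      fun j hj => mem_sdiff.2 ⟨hBS hj, fun hjW => (mem_sdiff.1 hjW).2 hj⟩
  have hp_DW := sum_inter_add_sum_sdiff (S \ T) B p
  have hl_DW := sum_inter_add_sum_sdiff (S \ T) B l
  have hl_S := sum_inter_add_sum_sdiff S T l
  have hl_W := sum_sdiff (f := l) (sdiff_subset.trans sdiff_subset : W ⊆ S)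
  have hv_empty : c ≤ v ∅ := by simpa using hlow ∅
  have hbound := mul_le_of_close_to_linear (t := v D - v ∅) hα hε hc
    (sum_nonneg fun j _ => hl j : 0 ≤ ∑ j ∈ D, l j)
    (by linarith [sum_nonneg fun j (_ : j ∈ S ∩ T) => hl j, sum_nonneg fun j (_ : j ∈ W) => hl j])
    (hlow S) (hup S) (by linarith [hmono (inter_subset_right.trans hBS : D ⊆ S)])
    (by linarith [hup D])
  linarith [hlow (S \ W)]

theorem linear_add_sum_price_le (hα : 1 ≤ α) (hε : 0 ≤ ε) (hc : 0 ≤ c) (hl : ∀ j, 0 ≤ l j)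
    (hlow : ∀ X, c + ∑ j ∈ X, l j ≤ v X) (hup : ∀ X, v X ≤ (1 + ε) * (c + ∑ j ∈ X, l j))
    (hmono : Monotone v) (hBS : B ⊆ S) (hIR : ∀ B' ⊆ B, ∑ j ∈ B', p j ≤ α * (v B' - v ∅))
    (hopt : ∀ X, v (B ∪ X) - ∑ j ∈ B ∪ X, p j ≤ v S - ∑ j ∈ S, p j) :
    c + ∑ j ∈ T, l j + ∑ j ∈ S \ T, p j ≤ (α + 2 * ε) * v S + ∑ j ∈ T \ S, p j := by
  have hretained := retained_add_sum_price_le (T := T) hα hε hc hl hlow hup hmono hBS hIR hopt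
  have hgain := sub_le_sum_price_sdiff (T := T) hopt hBS
  have hT_split := sum_inter_add_sum_sdiff T S l
  have hST_split := sum_sdiff (f := l) (subset_union_left : S ⊆ S ∪ T)
  rw [inter_comm] at hT_split
  rw [union_sdiff_left] at hST_split
  linarith [hlow (S ∪ T)]

end Player

theorem sum_sum_sdiff_le_sum_sum_sdiff {ι M R : Type*} [Fintype ι] [DecidableEq M]
    [AddCommMonoid R] [PartialOrder R] [IsOrderedAddMonoid R] {p : M → R} (hp : ∀ j, 0 ≤ p j)
    {S T : ι → Finset M} (hS : Pairwise (Disjoint on S)) (hT : Pairwise (Disjoint on T))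
    (hcover : ∀ j, ∃ i, j ∈ S i) :
    ∑ i, ∑ j ∈ T i \ S i, p j ≤ ∑ i, ∑ j ∈ S i \ T i, p j := by
  have hTS : Pairwise (Disjoint on fun i => T i \ S i) :=
    hT.mono fun _ _ h => h.mono sdiff_subset sdiff_subset
  have hST : Pairwise (Disjoint on fun i => S i \ T i) :=
    hS.mono fun _ _ h => h.mono sdiff_subset sdiff_subset
  rw [← sum_biUnion (hTS.set_pairwise _), ← sum_biUnion (hST.set_pairwise _)]
  refine sum_le_sum_of_subset_of_nonneg ?_ fun j _ _ => hp j
  intro j hj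
  simp only [mem_biUnion, mem_univ, true_and, mem_sdiff] at hj ⊢
  obtain ⟨i, hjT, hjS⟩ := hj
  obtain ⟨i', hjS'⟩ := hcover j
  have hne : i ≠ i' := fun h => hjS (h ▸ hjS')
  exact ⟨i', hjS', fun hjT' => disjoint_left.1 (hT hne) hjT hjT'⟩

theorem kelso_crawford_close_to_linear_welfare_general
    {N M : Type*} [Fintype N] [DecidableEq M]
    (α ε : ℝ) (hα : 1 ≤ α) (hε : 0 ≤ ε)
    (v : N → Finset M → ℝ)
    (hmono : ∀ (i : N) (S T : Finset M), S ⊆ T → v i S ≤ v i T)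
    (c : N → ℝ) (hc : ∀ i, 0 ≤ c i)
    (l : N → M → ℝ) (hl : ∀ i j, 0 ≤ l i j)
    (ℓ : N → Finset M → ℝ)
    (hℓ : ∀ (i : N) (S : Finset M), ℓ i S = c i + ∑ j ∈ S, l i j)
    (hclose : ∀ (i : N) (S : Finset M), ℓ i S ≤ v i S ∧ v i S ≤ (1 + ε) * ℓ i S)
    (p : M → ℝ) (hp : ∀ j : M, 0 ≤ p j)
    (S : N → Finset M)
    (hdisj : ∀ i i' : N, i ≠ i' → Disjoint (S i) (S i'))
    (hfull : ∀ j : M, ∃ i : N, j ∈ S i)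
    (B : N → Finset M) (hBS : ∀ i : N, B i ⊆ S i)
    (hIR : ∀ (i : N) (B'' : Finset M), B'' ⊆ B i →
      α * (v i B'' - v i ∅) ≥ ∑ j ∈ B'', p j)
    (hopt : ∀ (i : N) (X : Finset M),
      v i (S i) - (∑ j ∈ S i, p j) ≥ v i (B i ∪ X) - ∑ j ∈ B i ∪ X, p j) :
    ∀ T : N → Finset M, (∀ i i' : N, i ≠ i' → Disjoint (T i) (T i')) →
      ∑ i : N, v i (S i) ≥ (∑ i : N, v i (T i)) / ((1 + ε) * (α + 2 * ε)) := by
  intro T hT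
  have hlow (i : N) (X : Finset M) : c i + ∑ j ∈ X, l i j ≤ v i X := hℓ i X ▸ (hclose i X).1
  have hup (i : N) (X : Finset M) : v i X ≤ (1 + ε) * (c i + ∑ j ∈ X, l i j) :=
    hℓ i X ▸ (hclose i X).2
  have hplayer := sum_le_sum fun i (_ : i ∈ univ) =>
    linear_add_sum_price_le (T := T i) hα hε (hc i) (hl i) (hlow i) (hup i) (hmono i) (hBS i)
      (hIR i) (hopt i)
  have hprices := sum_sum_sdiff_le_sum_sum_sdiff (ι := N) hp (fun i i' => hdisj i i')
    (fun i i' => hT i i') hfull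
  have hlinear : ∑ i, ℓ i (T i) ≤ (α + 2 * ε) * ∑ i, v i (S i) := by
    simp only [sum_add_distrib, ← mul_sum] at hplayer
    simp only [hℓ, sum_add_distrib]
    linarith
  have hvalue : ∑ i, v i (T i) ≤ (1 + ε) * ∑ i, ℓ i (T i) := by
    rw [mul_sum]
    exact sum_le_sum fun i _ => (hclose i (T i)).2
  rw [ge_iff_le, div_le_iff₀ (mul_pos (by linarith) (by linarith))]
  calc ∑ i, v i (T i) ≤ (1 + ε) * ((α + 2 * ε) * ∑ i, v i (S i)) :=
        hvalue.trans (mul_le_mul_of_nonneg_left hlinear (by linarith))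
    _ = (∑ i, v i (S i)) * ((1 + ε) * (α + 2 * ε)) := by ring

/-- welfare guarantee of Kelso–Crawford for `α`-submodular
valuations `ε`-close to linear.  Each `v_i` is monotone, `α`-submodular
(`α ≥ 1`) and `ε`-close to a linear valuation `ℓ_i`.  Suppose `(S_i)` is a full
allocation and `p` a price vector such that for each player `i` there is
`B_i ⊆ S_i` with: (i) `α·(v_i(B'') − v_i(∅)) ≥ p(B'')` for every `B'' ⊆ B_i`;
and (ii) `v_i(S_i) − p(S_i) ≥ v_i(B_i ∪ X) − p(B_i ∪ X)` for every `X ⊆ M`.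
Then `Σ_i v_i(S_i) ≥ OPT / ((1+ε)·(α+2ε))`, i.e. the welfare of `(S_i)` is
within that factor of the welfare of every allocation. -/
theorem kelso_crawford_close_to_linear_welfare
    {N M : Type*} [Fintype N] [Fintype M] [DecidableEq M]
    (α ε : ℝ) (hα : 1 ≤ α) (hε : 0 ≤ ε)
    (v : N → Finset M → ℝ)
    (hv : ∀ (i : N) (S : Finset M), 0 ≤ v i S)
    (hmono : ∀ (i : N) (S T : Finset M), S ⊆ T → v i S ≤ v i T)
    (hsub : ∀ (i : N) (S T : Finset M), S ⊆ T → ∀ j : M, j ∉ T →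
      α * (v i (insert j S) - v i S) ≥ v i (insert j T) - v i T)
    (c : N → ℝ) (hc : ∀ i, 0 ≤ c i)
    (l : N → M → ℝ) (hl : ∀ i j, 0 ≤ l i j)
    (ℓ : N → Finset M → ℝ)
    (hℓ : ∀ (i : N) (S : Finset M), ℓ i S = c i + ∑ j ∈ S, l i j)
    (hclose : ∀ (i : N) (S : Finset M), ℓ i S ≤ v i S ∧ v i S ≤ (1 + ε) * ℓ i S)
    (p : M → ℝ) (hp : ∀ j : M, 0 ≤ p j)
    (S : N → Finset M)
    (hdisj : ∀ i i' : N, i ≠ i' → Disjoint (S i) (S i'))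
    (hfull : ∀ j : M, ∃ i : N, j ∈ S i)
    (B : N → Finset M) (hBS : ∀ i : N, B i ⊆ S i)
    (hIR : ∀ (i : N) (B'' : Finset M), B'' ⊆ B i →
      α * (v i B'' - v i ∅) ≥ ∑ j ∈ B'', p j)
    (hopt : ∀ (i : N) (X : Finset M),
      v i (S i) - (∑ j ∈ S i, p j) ≥ v i (B i ∪ X) - ∑ j ∈ B i ∪ X, p j) :
    ∀ T : N → Finset M, (∀ i i' : N, i ≠ i' → Disjoint (T i) (T i')) →
      ∑ i : N, v i (S i) ≥ (∑ i : N, v i (T i)) / ((1 + ε) * (α + 2 * ε)) :=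
  kelso_crawford_close_to_linear_welfare_general α ε hα hε v hmono c hc l hl ℓ hℓ hclose p hp S
    hdisj hfull B hBS hIR hopt
end

section
/- Let v : 2^M → ℝ≥0 be a monotone α-submodular valuation (α ≥ 1) and p : M → ℝ≥0 a price vector. Suppose S ⊆ M is strongly α-IR, i.e., α·v(T) ≥ p(T) for every T ⊆ S, and suppose D ⊆ M∖S maximizes v(D' | S) − p(D') over all D' ⊆ M∖S. Then S ∪ D is strongly α-IR: α·v(U) ≥ p(U) for every U ⊆ S ∪ D. -/
/-! Split `U ⊆ S ∪ D` as `T ∪ E` with `T ⊆ S` and `E ⊆ D`. Since `S` is strongly `α`-IR,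
`p(T) ≤ α·v(T)`. Maximality of `D` against `D ∖ E` gives `p(E) ≤ v(E | (D ∖ E) ∪ S)`, and
`α`-submodularity, applied one item of `E` at a time (the marginals telescope, so the factor `α`
is paid only once), bounds this by `α·v(E | T)`. Adding the two inequalities gives
`p(U) ≤ α·v(U)`. -/

open Finset

section
variable {M : Type*} [DecidableEq M]

theorem marginal_le_mul_marginal_of_subset {α : ℝ} {v : Finset M → ℝ}
    (hsub : ∀ S T : Finset M, S ⊆ T → ∀ j : M, j ∉ T →
      α * (v (insert j S) - v S) ≥ v (insert j T) - v T)
    {T B : Finset M} (hTB : T ⊆ B) {E : Finset M} (hEB : Disjoint E B) :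
    v (E ∪ B) - v B ≤ α * (v (E ∪ T) - v T) := by
  induction E using Finset.induction_on with
  | empty => simp
  | insert a s ha ih =>
    rw [disjoint_insert_left] at hEB
    have step := hsub (s ∪ T) (s ∪ B) (union_subset_union_right hTB) a (by simp [ha, hEB.1])
    rw [insert_union, insert_union]
    linarith [ih hEB.2]

theorem sum_le_marginal_of_maximizer {v : Finset M → ℝ} {p : M → ℝ} {S D : Finset M}
    (hD : Disjoint D S)
    (hDmax : ∀ D' : Finset M, Disjoint D' S →
      v (D ∪ S) - v S - (∑ j ∈ D, p j) ≥ v (D' ∪ S) - v S - ∑ j ∈ D', p j)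
    {E : Finset M} (hED : E ⊆ D) :
    ∑ j ∈ E, p j ≤ v (D ∪ S) - v (D \ E ∪ S) := by
  have hmax := hDmax (D \ E) (disjoint_of_subset_left sdiff_subset hD)
  rw [← sum_sdiff hED] at hmax
  linarith

end

theorem strong_alpha_IR_preserved_general
    {M : Type*} [DecidableEq M]
    (α : ℝ)
    (v : Finset M → ℝ)
    (hsub : ∀ S T : Finset M, S ⊆ T → ∀ j : M, j ∉ T →
      α * (v (insert j S) - v S) ≥ v (insert j T) - v T)
    (p : M → ℝ)
    (S : Finset M)
    (hSIR : ∀ T : Finset M, T ⊆ S → α * v T ≥ ∑ j ∈ T, p j)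
    (D : Finset M) (hD : Disjoint D S)
    (hDmax : ∀ D' : Finset M, Disjoint D' S →
      v (D ∪ S) - v S - (∑ j ∈ D, p j) ≥ v (D' ∪ S) - v S - ∑ j ∈ D', p j) :
    ∀ U : Finset M, U ⊆ S ∪ D → α * v U ≥ ∑ j ∈ U, p j := by
  intro U hU
  have hU_split : U = U ∩ S ∪ U ∩ D := by
    rw [← inter_union_distrib_left, inter_eq_left.mpr hU]
  set T := U ∩ S
  set E := U ∩ D
  have hTS : T ⊆ S := inter_subset_right
  have hED : E ⊆ D := inter_subset_right
  have hpE := sum_le_marginal_of_maximizer hD hDmax hED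
  have hgain : v (D ∪ S) - v (D \ E ∪ S) ≤ α * (v (E ∪ T) - v T) := by
    have h := marginal_le_mul_marginal_of_subset hsub (B := D \ E ∪ S)
      (hTS.trans subset_union_right) (disjoint_union_right.mpr ⟨disjoint_sdiff, disjoint_of_subset_left hED hD⟩)
    rwa [← union_assoc, union_sdiff_of_subset hED] at h
  have hTE : Disjoint T E := disjoint_of_subset_left hTS (disjoint_of_subset_right hED hD.symm)
  rw [hU_split, sum_union hTE, union_comm]
  linarith [hSIR T hTS]

/-- Lemma: strong `α`-IR is preserved by utility-maximizing
additions in Kelso–Crawford.  Let `v` be a monotone `α`-submodular valuation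
(`α ≥ 1`) and `p` a price vector.  If `S` is strongly `α`-IR
(`α·v(T) ≥ p(T)` for all `T ⊆ S`) and `D ⊆ M ∖ S` maximizes
`v(D' | S) − p(D')` over all `D' ⊆ M ∖ S`, then `S ∪ D` is strongly `α`-IR. -/
theorem strong_alpha_IR_preserved
    {M : Type*} [Fintype M] [DecidableEq M]
    (α : ℝ) (hα : 1 ≤ α)
    (v : Finset M → ℝ)
    (hv : ∀ S : Finset M, 0 ≤ v S)
    (hmono : ∀ S T : Finset M, S ⊆ T → v S ≤ v T)
    (hsub : ∀ S T : Finset M, S ⊆ T → ∀ j : M, j ∉ T →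
      α * (v (insert j S) - v S) ≥ v (insert j T) - v T)
    (p : M → ℝ) (hp : ∀ j : M, 0 ≤ p j)
    (S : Finset M)
    (hSIR : ∀ T : Finset M, T ⊆ S → α * v T ≥ ∑ j ∈ T, p j)
    (D : Finset M) (hD : Disjoint D S)
    (hDmax : ∀ D' : Finset M, Disjoint D' S →
      v (D ∪ S) - v S - (∑ j ∈ D, p j) ≥ v (D' ∪ S) - v S - ∑ j ∈ D', p j) :
    ∀ U : Finset M, U ⊆ S ∪ D → α * v U ≥ ∑ j ∈ U, p j :=
  strong_alpha_IR_preserved_general α v hsub p S hSIR D hD hDmax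
end

section
/- Consider a market with finite player set N and item set M, where each valuation v_i : 2^M → ℝ≥0 is monotone and α-submodular (α ≥ 1). Let p : M → ℝ≥0 and let (S_i)_{i∈N} be a full allocation of M such that for every player i: (i) S_i is strongly α-IR, i.e., α·v_i(T) ≥ p(T) for every T ⊆ S_i; and (ii) no beneficial addition exists, i.e., v_i(T | S_i) ≤ p(T) for every T ⊆ M∖S_i. Then Σ_i v_i(S_i) ≥ OPT/(1+α), where OPT is the maximum of Σ_i v_i(O_i) over all allocations (O_i). -/
/-!
Since no addition is beneficial, monotonicity gives `vᵢ(Oᵢ) ≤ vᵢ(Oᵢ ∪ Sᵢ) ≤ vᵢ(Sᵢ) + p(Oᵢ)`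
for any allocation `O`. The `Oᵢ` are disjoint and the `Sᵢ` cover `M`, so with nonnegative prices
`Σᵢ p(Oᵢ) ≤ Σᵢ p(Sᵢ)`, and strong `α`-IR applied to the bundles themselves gives
`p(Sᵢ) ≤ α vᵢ(Sᵢ)`.
-/

open Finset

namespace Finset

variable {ι α β : Type*} [DecidableEq α] [AddCommMonoid β] [PartialOrder β]
  [IsOrderedAddMonoid β] {p : α → β}

theorem sum_biUnion_le_sum_sum (hp : ∀ j, 0 ≤ p j) (s : Finset ι) (S : ι → Finset α) :
    ∑ j ∈ s.biUnion S, p j ≤ ∑ i ∈ s, ∑ j ∈ S i, p j := by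
  rw [← sup_eq_biUnion]
  refine s.apply_sup_le_sum (f := fun A ↦ ∑ j ∈ A, p j) sum_empty fun {A B} ↦ ?_
  rw [← sum_union_inter]
  exact le_add_of_nonneg_right (sum_nonneg fun j _ ↦ hp j)

theorem sum_sum_le_sum_sum_of_pairwiseDisjoint (hp : ∀ j, 0 ≤ p j) {s : Finset ι}
    {O S : ι → Finset α} (hO : (s : Set ι).PairwiseDisjoint O)
    (hcover : s.biUnion O ⊆ s.biUnion S) :
    ∑ i ∈ s, ∑ j ∈ O i, p j ≤ ∑ i ∈ s, ∑ j ∈ S i, p j :=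
  calc ∑ i ∈ s, ∑ j ∈ O i, p j = ∑ j ∈ s.biUnion O, p j := (sum_biUnion hO).symm
    _ ≤ ∑ j ∈ s.biUnion S, p j := sum_le_sum_of_subset_of_nonneg hcover fun j _ _ ↦ hp j
    _ ≤ ∑ i ∈ s, ∑ j ∈ S i, p j := sum_biUnion_le_sum_sum hp s S

end Finset

theorem le_add_sum_of_no_beneficial_addition {M : Type*} [DecidableEq M] {v : Finset M → ℝ}
    {p : M → ℝ} (hmono : Monotone v) (hp : ∀ j, 0 ≤ p j) {S : Finset M}
    (hnoadd : ∀ T, Disjoint T S → v (T ∪ S) - v S ≤ ∑ j ∈ T, p j) (O : Finset M) :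
    v O ≤ v S + ∑ j ∈ O, p j := by
  have hO : O ⊆ (O \ S) ∪ S := by rw [sdiff_union_self_eq_union]; exact subset_union_left
  have hprice : ∑ j ∈ O \ S, p j ≤ ∑ j ∈ O, p j :=
    sum_le_sum_of_subset_of_nonneg sdiff_subset fun j _ _ ↦ hp j
  linarith [hmono hO, hnoadd (O \ S) sdiff_disjoint]

theorem kelso_crawford_alpha_submodular_welfare_general
    {N M : Type*} [Fintype N] [DecidableEq M]
    (α : ℝ) (hα : 1 ≤ α)
    (v : N → Finset M → ℝ)
    (hmono : ∀ (i : N) (S T : Finset M), S ⊆ T → v i S ≤ v i T)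
    (p : M → ℝ) (hp : ∀ j : M, 0 ≤ p j)
    (S : N → Finset M)
    (hfull : ∀ j : M, ∃ i : N, j ∈ S i)
    (hIR : ∀ (i : N) (T : Finset M), T ⊆ S i → α * v i T ≥ ∑ j ∈ T, p j)
    (hnoadd : ∀ (i : N) (T : Finset M), Disjoint T (S i) →
      v i (T ∪ S i) - v i (S i) ≤ ∑ j ∈ T, p j) :
    ∀ O : N → Finset M, (∀ i i' : N, i ≠ i' → Disjoint (O i) (O i')) →
      ∑ i : N, v i (S i) ≥ (∑ i : N, v i (O i)) / (1 + α) := by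
  intro O hO
  have hcover : univ.biUnion O ⊆ univ.biUnion S := fun j _ ↦
    have ⟨i, hi⟩ := hfull j
    mem_biUnion.2 ⟨i, mem_univ i, hi⟩
  rw [ge_iff_le, div_le_iff₀ (by linarith)]
  calc ∑ i, v i (O i) ≤ ∑ i, (v i (S i) + ∑ j ∈ O i, p j) :=
        sum_le_sum fun i _ ↦ le_add_sum_of_no_beneficial_addition (hmono i) hp (hnoadd i) (O i)
    _ = ∑ i, v i (S i) + ∑ i, ∑ j ∈ O i, p j := sum_add_distrib
    _ ≤ ∑ i, v i (S i) + ∑ i, ∑ j ∈ S i, p j := add_le_add_right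
        (sum_sum_le_sum_sum_of_pairwiseDisjoint hp (fun i _ i' _ ↦ hO i i') hcover) _
    _ ≤ ∑ i, v i (S i) + ∑ i, α * v i (S i) := by
        gcongr with i
        exact hIR i (S i) subset_rfl
    _ = (∑ i, v i (S i)) * (1 + α) := by rw [← mul_sum]; ring

/-- Corollary: Kelso–Crawford gives a `(1+α)`-approximation
for `α`-submodular valuations.  Each `v_i` is monotone and `α`-submodular
(`α ≥ 1`).  Suppose `(S_i)` is a full allocation and `p` a price vector such
that for every player `i`: (i) `S_i` is strongly `α`-IR (`α·v_i(T) ≥ p(T)` for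
all `T ⊆ S_i`); and (ii) no beneficial addition exists
(`v_i(T | S_i) ≤ p(T)` for all `T ⊆ M ∖ S_i`).  Then
`Σ_i v_i(S_i) ≥ OPT/(1+α)`, i.e. the welfare of `(S_i)` is within a factor
`1+α` of the welfare of every allocation. -/
theorem kelso_crawford_alpha_submodular_welfare
    {N M : Type*} [Fintype N] [Fintype M] [DecidableEq M]
    (α : ℝ) (hα : 1 ≤ α)
    (v : N → Finset M → ℝ)
    (hv : ∀ (i : N) (S : Finset M), 0 ≤ v i S)
    (hmono : ∀ (i : N) (S T : Finset M), S ⊆ T → v i S ≤ v i T)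
    (hsub : ∀ (i : N) (S T : Finset M), S ⊆ T → ∀ j : M, j ∉ T →
      α * (v i (insert j S) - v i S) ≥ v i (insert j T) - v i T)
    (p : M → ℝ) (hp : ∀ j : M, 0 ≤ p j)
    (S : N → Finset M)
    (hdisj : ∀ i i' : N, i ≠ i' → Disjoint (S i) (S i'))
    (hfull : ∀ j : M, ∃ i : N, j ∈ S i)
    (hIR : ∀ (i : N) (T : Finset M), T ⊆ S i → α * v i T ≥ ∑ j ∈ T, p j)
    (hnoadd : ∀ (i : N) (T : Finset M), Disjoint T (S i) →
      v i (T ∪ S i) - v i (S i) ≤ ∑ j ∈ T, p j) :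
    ∀ O : N → Finset M, (∀ i i' : N, i ≠ i' → Disjoint (O i) (O i')) →
      ∑ i : N, v i (S i) ≥ (∑ i : N, v i (O i)) / (1 + α) :=
  kelso_crawford_alpha_submodular_welfare_general α hα v hmono p hp S hfull hIR hnoadd
end

section
/- Let 𝒫 be a partition of the finite item set M, let w : M → {0,1}, and let r be the associated unweighted transversal valuation: r(S) := the number of parts P ∈ 𝒫 containing some item j ∈ S ∩ P with w(j) = 1. Let v : 2^M → ℝ≥0 be a monotone α-submodular valuation (α ≥ 1) that is ε-close to r. Then for every part P ∈ 𝒫, every X ⊆ P, and every bundle Y in which P is represented (i.e., there is y ∈ Y ∩ P with w(y) = 1), we have v(X | Y) ≤ α·ε. -/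
/-- Claim: marginal values over represented parts are tiny.
Let `𝒫` be a partition of `M` (given by the fibers of `π : M → κ`), let
`good : M → Prop` encode the `{0,1}` item weights, and let `r` be the
associated unweighted transversal valuation: `r(S)` is the number of parts
containing a good item of `S`.  If `v` is a monotone `α`-submodular valuation
(`α ≥ 1`) that is `ε`-close to `r`, then for every part `P`, every `X`
contained in `P`, and every `Y` in which `P` is represented (i.e. `Y` contains
a good item of `P`), we have `v(X | Y) ≤ α·ε`. -/
theorem marginal_small_on_represented_part
    {M κ : Type*} [Fintype M] [DecidableEq M] [Fintype κ] [DecidableEq κ]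
    (α ε : ℝ) (hα : 1 ≤ α) (hε : 0 ≤ ε)
    (π : M → κ) (good : M → Prop) [DecidablePred good]
    (r : Finset M → ℝ)
    (hr : ∀ S : Finset M, r S =
      ((Finset.univ : Finset κ).filter
        (fun P : κ => ∃ j ∈ S, π j = P ∧ good j)).card)
    (v : Finset M → ℝ)
    (hv : ∀ S : Finset M, 0 ≤ v S)
    (hmono : ∀ S T : Finset M, S ⊆ T → v S ≤ v T)
    (hsub : ∀ S T : Finset M, S ⊆ T → ∀ j : M, j ∉ T →
      α * (v (insert j S) - v S) ≥ v (insert j T) - v T)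
    (hclose : ∀ S : Finset M, r S ≤ v S ∧ v S ≤ (1 + ε) * r S)
    (P : κ) (X : Finset M) (hX : ∀ x ∈ X, π x = P)
    (Y : Finset M) (hYrep : ∃ y ∈ Y, π y = P ∧ good y) :
    v (X ∪ Y) - v Y ≤ α * ε := by
  obtain ⟨y, hyY, hyP, hyg⟩ := hYrep
  -- Key lemma by induction: v (X ∪ Y) - v Y ≤ α * (v (X ∪ {y}) - v {y})
  have hα0 : (0:ℝ) ≤ α := le_trans zero_le_one hα
  have key : ∀ Z : Finset M, v (Z ∪ Y) - v Y ≤ α * (v (Z ∪ {y}) - v {y}) := by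
    intro Z
    induction Z using Finset.induction_on with
    | empty =>
        simp only [Finset.empty_union, sub_self, mul_zero, le_refl]
    | @insert j Z' hj ih =>
        by_cases hjY : j ∈ Y ∨ j ∈ Z'
        · have h1 : insert j Z' ∪ Y = Z' ∪ Y := by
            rcases hjY with h | h
            · rw [Finset.insert_union, Finset.insert_eq_self.mpr (Finset.mem_union_right _ h)]
            · rw [Finset.insert_union, Finset.insert_eq_self.mpr (Finset.mem_union_left _ h)]
          have h2 : v (Z' ∪ {y}) ≤ v (insert j Z' ∪ {y}) := by
            apply hmono
            rw [Finset.insert_union]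
            exact Finset.subset_insert _ _
          rw [h1]
          calc v (Z' ∪ Y) - v Y ≤ α * (v (Z' ∪ {y}) - v {y}) := ih
            _ ≤ α * (v (insert j Z' ∪ {y}) - v {y}) := by
                apply mul_le_mul_of_nonneg_left _ hα0
                linarith
        · push_neg at hjY
          obtain ⟨hjY, hjZ'⟩ := hjY
          have hjT : j ∉ Z' ∪ Y := by simp [hjY, hjZ']
          have hs : Z' ∪ {y} ⊆ Z' ∪ Y := by
            apply Finset.union_subset_union_right
            simpa using hyY
          have hstep := hsub (Z' ∪ {y}) (Z' ∪ Y) hs j hjT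
          have e1 : insert j Z' ∪ Y = insert j (Z' ∪ Y) := Finset.insert_union _ _ _
          have e2 : insert j Z' ∪ {y} = insert j (Z' ∪ {y}) := Finset.insert_union _ _ _
          rw [e1, e2]
          have : v (insert j (Z' ∪ Y)) - v Y =
              (v (insert j (Z' ∪ Y)) - v (Z' ∪ Y)) + (v (Z' ∪ Y) - v Y) := by ring
          rw [this]
          have := ih
          nlinarith [hstep, ih]
  -- compute r on X ∪ {y} and {y}
  have hone : ∀ Z : Finset M, y ∈ Z → (∀ x ∈ Z, π x = P) → r Z = 1 := by
    intro Z hyZ hZP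
    rw [hr]
    have : (Finset.univ.filter (fun Q : κ => ∃ j ∈ Z, π j = Q ∧ good j)) = {P} := by
      ext Q
      simp only [Finset.mem_filter, Finset.mem_univ, true_and, Finset.mem_singleton]
      constructor
      · rintro ⟨j, hjZ, hjQ, _⟩
        rw [← hjQ, hZP j hjZ]
      · rintro rfl
        exact ⟨y, hyZ, hyP, hyg⟩
    rw [this]
    simp
  have hy1 : r {y} = 1 := hone {y} (Finset.mem_singleton_self y) (by
    intro x hx
    rw [Finset.mem_singleton] at hx
    subst hx; exact hyP)
  have hXy1 : r (X ∪ {y}) = 1 := hone (X ∪ {y}) (by simp) (by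
    intro x hx
    rcases Finset.mem_union.mp hx with h | h
    · exact hX x h
    · rw [Finset.mem_singleton] at h; subst h; exact hyP)
  have hupper := (hclose (X ∪ {y})).2
  have hlower := (hclose {y}).1
  rw [hXy1] at hupper
  rw [hy1] at hlower
  have hfin : v (X ∪ {y}) - v {y} ≤ ε := by linarith
  calc v (X ∪ Y) - v Y ≤ α * (v (X ∪ {y}) - v {y}) := key X
    _ ≤ α * ε := mul_le_mul_of_nonneg_left hfin hα0
end

section
/- A monotone valuation v : 2^M → ℝ≥0 is submodular if and only if it is 0-SI; that is, v(j | S) ≥ v(j | T) for all S ⊆ T and j ∉ T if and only if for every price vector p : M → ℝ≥0 and every bundle S that is in local demand given p, both (a) v(T) ≥ p(T) for every T ⊆ S, and (b) v(S) ≥ v(T) − p(T) for every T ⊆ M. -/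
/-!
If `v` is submodular and `S` is in local demand, the removal condition makes every item of `S`
worth at least its price at the margin `S`, and submodularity carries this down to any `T ⊆ S`;
the addition condition makes every outside item worth at most its price at the margin `S`, and
submodularity carries this up to `S ∪ T`. Conversely, pricing every item at its marginal value
over a fixed bundle `A` puts `A` in local demand, and the `0`-SI bound for `A ∪ {b, j}` is exactly
`v(j | A ∪ {b}) ≤ v(j | A)`.
-/

/-- The price of a bundle: `p(S) = Σ_{j∈S} p j`. -/
def bundlePrice {M : Type*} [DecidableEq M] (p : M → ℝ) (S : Finset M) : ℝ :=
  ∑ j ∈ S, p j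

/-- A bundle `S` is in local demand for `v` given prices `p` if its utility
cannot be strictly increased by adding one item, removing one item, or swapping
one item of `S` for one item outside `S`. -/
def InLocalDemand {M : Type*} [Fintype M] [DecidableEq M]
    (v : Finset M → ℝ) (p : M → ℝ) (S : Finset M) : Prop :=
  (∀ j : M, j ∉ S →
    v S - bundlePrice p S ≥ v (insert j S) - bundlePrice p (insert j S)) ∧
  (∀ j ∈ S,
    v S - bundlePrice p S ≥ v (S.erase j) - bundlePrice p (S.erase j)) ∧
  (∀ j ∈ S, ∀ j' : M, j' ∉ S →
    v S - bundlePrice p S ≥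
      v (insert j' (S.erase j)) - bundlePrice p (insert j' (S.erase j)))

section

open Finset

variable {M : Type*} [DecidableEq M]

def IsSubmodular (v : Finset M → ℝ) : Prop :=
  ∀ S T : Finset M, S ⊆ T → ∀ j : M, j ∉ T → v (insert j S) - v S ≥ v (insert j T) - v T

theorem isSubmodular_of_insert_insert {v : Finset M → ℝ}
    (h : ∀ A : Finset M, ∀ b ∉ A, ∀ j ∉ insert b A,
      v (insert j (insert b A)) - v (insert b A) ≤ v (insert j A) - v A) :
    IsSubmodular v := by
  intro S T
  induction T using Finset.strongInduction with
  | _ T ih =>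
    intro hST j hjT
    obtain rfl | hST' := eq_or_ssubset_of_subset hST
    · exact le_rfl
    obtain ⟨b, hbT, hbS⟩ := exists_of_ssubset hST'
    have hjb : j ∉ insert b (T.erase b) := by rwa [insert_erase hbT]
    have hstep := h (T.erase b) b (notMem_erase b T) j hjb
    rw [insert_erase hbT] at hstep
    have hind := ih (T.erase b) (erase_ssubset hbT) (subset_erase.mpr ⟨hST, hbS⟩) j
      (fun h => hjT (mem_of_mem_erase h))
    linarith

namespace IsSubmodular

variable {v : Finset M → ℝ}

theorem le_add_sum_marginal (hv : IsSubmodular v) {S A : Finset M} (hSA : Disjoint S A) :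
    v (S ∪ A) ≤ v S + ∑ a ∈ A, (v (insert a S) - v S) := by
  induction A using Finset.induction_on with
  | empty => simp
  | @insert a A haA ih =>
    have haS : a ∉ S := disjoint_right.mp hSA (mem_insert_self a A)
    have hstep := hv S (S ∪ A) subset_union_left a (by simp [haS, haA])
    rw [union_insert, sum_insert haA]
    linarith [ih (hSA.mono_right (subset_insert a A))]

theorem add_sum_marginal_le (hv : IsSubmodular v) {S T : Finset M} (hTS : T ⊆ S) :
    v ∅ + ∑ a ∈ T, (v S - v (S.erase a)) ≤ v T := by
  induction T using Finset.induction_on with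
  | empty => simp
  | @insert a T haT ih =>
    have haS : a ∈ S := hTS (mem_insert_self a T)
    have hT : T ⊆ S := (subset_insert a T).trans hTS
    have hstep := hv T (S.erase a) (subset_erase.mpr ⟨hT, haT⟩) a (notMem_erase a S)
    rw [insert_erase haS] at hstep
    rw [sum_insert haT]
    linarith [ih hT]

end IsSubmodular

theorem bundlePrice_insert (p : M → ℝ) {S : Finset M} {j : M} (hj : j ∉ S) :
    bundlePrice p (insert j S) = p j + bundlePrice p S :=
  sum_insert hj

theorem bundlePrice_erase_add (p : M → ℝ) {S : Finset M} {j : M} (hj : j ∈ S) :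
    bundlePrice p (S.erase j) + p j = bundlePrice p S :=
  sum_erase_add S p hj

theorem bundlePrice_mono {p : M → ℝ} (hp : ∀ j, 0 ≤ p j) {S T : Finset M} (hST : S ⊆ T) :
    bundlePrice p S ≤ bundlePrice p T :=
  sum_le_sum_of_subset_of_nonneg hST fun j _ _ => hp j

section LocalDemand

variable [Fintype M] {v : Finset M → ℝ} {p : M → ℝ} {S : Finset M}

theorem InLocalDemand.marginal_le_price (hS : InLocalDemand v p S) {a : M} (ha : a ∉ S) :
    v (insert a S) - v S ≤ p a := by
  have := hS.1 a ha
  rw [bundlePrice_insert p ha] at this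
  linarith

theorem InLocalDemand.price_le_marginal_erase (hS : InLocalDemand v p S) {a : M} (ha : a ∈ S) :
    p a ≤ v S - v (S.erase a) := by
  have := hS.2.1 a ha
  rw [← bundlePrice_erase_add p ha] at this
  linarith

theorem IsSubmodular.price_le_of_inLocalDemand (hv : IsSubmodular v) (hv₀ : 0 ≤ v ∅)
    (hS : InLocalDemand v p S) {T : Finset M} (hTS : T ⊆ S) :
    bundlePrice p T ≤ v T :=
  calc bundlePrice p T
      ≤ ∑ a ∈ T, (v S - v (S.erase a)) :=
        sum_le_sum fun _ ha => hS.price_le_marginal_erase (hTS ha)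
    _ ≤ v ∅ + ∑ a ∈ T, (v S - v (S.erase a)) := le_add_of_nonneg_left hv₀
    _ ≤ v T := hv.add_sum_marginal_le hTS

theorem IsSubmodular.sub_price_le_of_inLocalDemand (hv : IsSubmodular v) (hmono : Monotone v)
    (hp : ∀ j, 0 ≤ p j) (hS : InLocalDemand v p S) (T : Finset M) :
    v T - bundlePrice p T ≤ v S := by
  have hunion : v (S ∪ (T \ S)) ≤ v S + bundlePrice p (T \ S) :=
    calc v (S ∪ (T \ S))
        ≤ v S + ∑ a ∈ T \ S, (v (insert a S) - v S) := hv.le_add_sum_marginal disjoint_sdiff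
      _ ≤ v S + bundlePrice p (T \ S) :=
        add_le_add le_rfl (sum_le_sum fun _ ha => hS.marginal_le_price (mem_sdiff.mp ha).2)
  have hT : v T ≤ v (S ∪ (T \ S)) := hmono (by simp)
  linarith [bundlePrice_mono hp (sdiff_subset : T \ S ⊆ T)]

end LocalDemand

def marginalPrice (v : Finset M → ℝ) (A : Finset M) (i : M) : ℝ :=
  v (insert i A) - v A

theorem marginalPrice_nonneg {v : Finset M → ℝ} (hmono : Monotone v) (A : Finset M) (i : M) :
    0 ≤ marginalPrice v A i :=
  sub_nonneg.mpr (hmono (subset_insert i A))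

theorem marginalPrice_of_mem (v : Finset M → ℝ) {A : Finset M} {i : M} (hi : i ∈ A) :
    marginalPrice v A i = 0 := by
  rw [marginalPrice, insert_eq_of_mem hi, sub_self]

theorem bundlePrice_marginalPrice_self (v : Finset M → ℝ) (A : Finset M) :
    bundlePrice (marginalPrice v A) A = 0 :=
  sum_eq_zero fun _ hi => marginalPrice_of_mem v hi

theorem inLocalDemand_marginalPrice [Fintype M] {v : Finset M → ℝ} (hmono : Monotone v)
    (A : Finset M) : InLocalDemand v (marginalPrice v A) A := by
  have hA := bundlePrice_marginalPrice_self v A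
  have herase : ∀ i ∈ A, bundlePrice (marginalPrice v A) (A.erase i) = 0 := fun i hi => by
    linarith [bundlePrice_erase_add (marginalPrice v A) hi, marginalPrice_of_mem v hi]
  refine ⟨fun j hj => ?_, fun i hi => ?_, fun i hi j hj => ?_⟩
  · rw [bundlePrice_insert _ hj, hA, marginalPrice]
    linarith
  · rw [herase i hi, hA]
    linarith [hmono (erase_subset i A)]
  · have hj' : j ∉ A.erase i := fun h => hj (mem_of_mem_erase h)
    rw [bundlePrice_insert _ hj', herase i hi, hA, marginalPrice]
    linarith [hmono (insert_subset_insert j (erase_subset i A))]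

end

/-- Observation: a monotone valuation is submodular iff it is
`0`-SI.  `v` is submodular (`v(j|S) ≥ v(j|T)` for `S ⊆ T`, `j ∉ T`) iff for
every nonnegative price vector `p` and every `S` in local demand given `p`:
(a) `v(T) ≥ p(T)` for every `T ⊆ S` (strong individual rationality), and
(b) `v(S) ≥ v(T) − p(T)` for every `T ⊆ M` (the `β = 0` SI condition
`v(S) − 0·p(S) ≥ v(T) − p(T)`). -/
theorem submodular_iff_zero_SI
    {M : Type*} [Fintype M] [DecidableEq M]
    (v : Finset M → ℝ)
    (hv : ∀ S : Finset M, 0 ≤ v S)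
    (hmono : ∀ S T : Finset M, S ⊆ T → v S ≤ v T) :
    (∀ S T : Finset M, S ⊆ T → ∀ j : M, j ∉ T →
      v (insert j S) - v S ≥ v (insert j T) - v T)
    ↔
    (∀ p : M → ℝ, (∀ j : M, 0 ≤ p j) → ∀ S : Finset M, InLocalDemand v p S →
      (∀ T : Finset M, T ⊆ S → v T ≥ bundlePrice p T) ∧
      (∀ T : Finset M, v S ≥ v T - bundlePrice p T)) := by
  have hmono' : Monotone v := fun S T h => hmono S T h
  constructor
  · intro hsub p hp S hS
    exact ⟨fun T hTS => IsSubmodular.price_le_of_inLocalDemand hsub (hv ∅) hS hTS,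
      IsSubmodular.sub_price_le_of_inLocalDemand hsub hmono' hp hS⟩
  · intro hSI
    refine isSubmodular_of_insert_insert fun A b hb j hj => ?_
    have hbound := (hSI _ (marginalPrice_nonneg hmono' A) A
      (inLocalDemand_marginalPrice hmono' A)).2 (insert j (insert b A))
    rw [bundlePrice_insert _ hj, bundlePrice_insert _ hb, bundlePrice_marginalPrice_self,
      marginalPrice, marginalPrice] at hbound
    linarith
end

section
/- Let β ∈ [0,1] and consider a market with finite player set N and item set M where each valuation v_i : 2^M → ℝ≥0 is monotone and β-SI. Let p : M → ℝ≥0 be a price vector and let (A_i)_{i∈N} be a full allocation of M such that each A_i is in local demand for player i given p. Then Σ_i v_i(A_i) ≥ OPT/(2−β), where OPT is the maximum of Σ_i v_i(O_i) over all allocations (O_i). -/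
/-- A valuation is `β`-SI if every bundle in local demand is strongly
individually rational and `β`-approximately in (global) demand. -/
def BetaSI {M : Type*} [Fintype M] [DecidableEq M]
    (β : ℝ) (v : Finset M → ℝ) : Prop :=
  ∀ p : M → ℝ, (∀ j : M, 0 ≤ p j) → ∀ S : Finset M, InLocalDemand v p S →
    (∀ T : Finset M, T ⊆ S → v T ≥ bundlePrice p T) ∧
    (∀ T : Finset M, v S - β * bundlePrice p S ≥ v T - bundlePrice p T)

section bundlePrice

variable {ι M : Type*} [DecidableEq M] (p : M → ℝ)

theorem bundlePrice_biUnion (s : Finset ι) (O : ι → Finset M)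
    (hO : (s : Set ι).PairwiseDisjoint O) :
    bundlePrice p (s.biUnion O) = ∑ i ∈ s, bundlePrice p (O i) :=
  Finset.sum_biUnion hO

variable [Fintype M]

theorem bundlePrice_le_univ (hp : ∀ j, 0 ≤ p j) (S : Finset M) :
    bundlePrice p S ≤ bundlePrice p Finset.univ :=
  Finset.sum_le_sum_of_subset_of_nonneg S.subset_univ fun j _ _ => hp j

variable [Fintype ι] (O : ι → Finset M)

theorem sum_bundlePrice_le_univ (hO : ∀ i i', i ≠ i' → Disjoint (O i) (O i'))
    (hp : ∀ j, 0 ≤ p j) :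
    ∑ i, bundlePrice p (O i) ≤ bundlePrice p Finset.univ := by
  rw [← bundlePrice_biUnion p _ O fun i _ i' _ => hO i i']
  exact bundlePrice_le_univ p hp _

theorem sum_bundlePrice_eq_univ (hO : ∀ i i', i ≠ i' → Disjoint (O i) (O i'))
    (hfull : ∀ j, ∃ i, j ∈ O i) :
    ∑ i, bundlePrice p (O i) = bundlePrice p Finset.univ := by
  rw [← bundlePrice_biUnion p _ O fun i _ i' _ => hO i i']
  congr 1
  refine Finset.eq_univ_of_forall fun j => ?_
  obtain ⟨i, hi⟩ := hfull j
  exact Finset.mem_biUnion.mpr ⟨i, Finset.mem_univ i, hi⟩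

end bundlePrice

namespace BetaSI

variable {M : Type*} [Fintype M] [DecidableEq M] {β : ℝ} {v : Finset M → ℝ}
  {p : M → ℝ} {S : Finset M}

theorem bundlePrice_le (h : BetaSI β v) (hp : ∀ j, 0 ≤ p j) (hS : InLocalDemand v p S) :
    bundlePrice p S ≤ v S :=
  (h p hp S hS).1 S subset_rfl

theorem sub_bundlePrice_le (h : BetaSI β v) (hp : ∀ j, 0 ≤ p j) (hS : InLocalDemand v p S)
    (T : Finset M) : v T - bundlePrice p T ≤ v S - β * bundlePrice p S :=
  (h p hp S hS).2 T

end BetaSI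

theorem beta_SI_local_demand_welfare_general
    {N M : Type*} [Fintype N] [Fintype M] [DecidableEq M]
    (β : ℝ) (hβ1 : β ≤ 1)
    (v : N → Finset M → ℝ)
    (hSI : ∀ i : N, BetaSI β (v i))
    (p : M → ℝ) (hp : ∀ j : M, 0 ≤ p j)
    (A : N → Finset M)
    (hdisj : ∀ i i' : N, i ≠ i' → Disjoint (A i) (A i'))
    (hfull : ∀ j : M, ∃ i : N, j ∈ A i)
    (hlocal : ∀ i : N, InLocalDemand (v i) p (A i)) :
    ∀ O : N → Finset M, (∀ i i' : N, i ≠ i' → Disjoint (O i) (O i')) →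
      ∑ i : N, v i (A i) ≥ (∑ i : N, v i (O i)) / (2 - β) := by
  intro O hO
  set P := bundlePrice p Finset.univ
  have hpriceA : ∑ i, bundlePrice p (A i) = P := sum_bundlePrice_eq_univ p A hdisj hfull
  have hpriceO : ∑ i, bundlePrice p (O i) ≤ P := sum_bundlePrice_le_univ p O hO hp
  have hIR : P ≤ ∑ i, v i (A i) :=
    hpriceA ▸ Finset.sum_le_sum fun i _ => (hSI i).bundlePrice_le hp (hlocal i)
  have hdemand : ∑ i, (v i (O i) - bundlePrice p (O i)) ≤
      ∑ i, (v i (A i) - β * bundlePrice p (A i)) :=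
    Finset.sum_le_sum fun i _ => (hSI i).sub_bundlePrice_le hp (hlocal i) (O i)
  rw [Finset.sum_sub_distrib, Finset.sum_sub_distrib, ← Finset.mul_sum, hpriceA] at hdemand
  rw [ge_iff_le, div_le_iff₀ (by linarith)]
  calc ∑ i, v i (O i) ≤ ∑ i, v i (A i) + (1 - β) * P := by linarith
    _ ≤ ∑ i, v i (A i) + (1 - β) * ∑ i, v i (A i) := by gcongr
    _ = (∑ i, v i (A i)) * (2 - β) := by ring

/-- Observation: welfare of local-demand allocations under
`β`-SI valuations.  Each `v_i` is monotone and `β`-SI (`β ∈ [0,1]`).  If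
`(A_i)` is a full allocation such that each `A_i` is in local demand for player
`i` given the nonnegative prices `p`, then `Σ_i v_i(A_i) ≥ OPT/(2−β)`, i.e. the
welfare of `(A_i)` is within a factor `2−β` of the welfare of every
allocation. -/
theorem beta_SI_local_demand_welfare
    {N M : Type*} [Fintype N] [Fintype M] [DecidableEq M]
    (β : ℝ) (hβ0 : 0 ≤ β) (hβ1 : β ≤ 1)
    (v : N → Finset M → ℝ)
    (hv : ∀ (i : N) (S : Finset M), 0 ≤ v i S)
    (hmono : ∀ (i : N) (S T : Finset M), S ⊆ T → v i S ≤ v i T)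
    (hSI : ∀ i : N, BetaSI β (v i))
    (p : M → ℝ) (hp : ∀ j : M, 0 ≤ p j)
    (A : N → Finset M)
    (hdisj : ∀ i i' : N, i ≠ i' → Disjoint (A i) (A i'))
    (hfull : ∀ j : M, ∃ i : N, j ∈ A i)
    (hlocal : ∀ i : N, InLocalDemand (v i) p (A i)) :
    ∀ O : N → Finset M, (∀ i i' : N, i ≠ i' → Disjoint (O i) (O i')) →
      ∑ i : N, v i (A i) ≥ (∑ i : N, v i (O i)) / (2 - β) :=
  beta_SI_local_demand_welfare_general β hβ1 v hSI p hp A hdisj hfull hlocal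
end

section
/- Let n ≥ 2 and a ≥ 1 be integers, let 0 < ε with ε² < 1 − 1/n, let M be a set of m = a·n items and (A_1, …, A_n) a partition of M with |A_i| = a for all i. Define for each i the valuations ℓ_i(S) := ε + |S ∩ A_i|/a, w_i(S) := (1+ε)·ε + |S|/(a·n), and v_i(S) := w_i(S) if ||S ∩ A_i| − |S|/n| ≤ ε²·a and v_i(S) := ℓ_i(S) otherwise. Then: (1) each v_i is 2ε-close to the linear valuation ℓ_i, i.e., ℓ_i(S) ≤ v_i(S) ≤ (1+2ε)·ℓ_i(S) for all S ⊆ M; (2) the allocation (A_1,…,A_n) satisfies Σ_i v_i(A_i) > n; and (3) every allocation (S_1,…,S_n) (pairwise disjoint subsets of M) satisfies Σ_i w_i(S_i) ≤ (1+ε)·ε·n + 1. -/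
/-- the construction behind the query-complexity lower bound
for valuations pointwise close to linear, Proposition 1 of the paper.
Let `n ≥ 2`, `a ≥ 1`, `0 < ε` with `ε² < 1 − 1/n`, let `M` have `m = a·n`
items, partitioned into `(A_1,…,A_n)` with `|A_i| = a`.  With
`ℓ_i(S) = ε + |S ∩ A_i|/a`, `w_i(S) = (1+ε)·ε + |S|/(a·n)`, and
`v_i(S) = w_i(S)` when `||S ∩ A_i| − |S|/n| ≤ ε²·a` and `v_i(S) = ℓ_i(S)`
otherwise, we have:
(1) each `v_i` is `2ε`-close to the linear valuation `ℓ_i`;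
(2) the allocation `(A_1,…,A_n)` has welfare `Σ_i v_i(A_i) > n` under `v`;
(3) every allocation has welfare at most `(1+ε)·ε·n + 1` under `w`. -/
theorem close_to_linear_lower_bound_construction
    {M : Type*} [Fintype M] [DecidableEq M]
    (n a : ℕ) (hn : 2 ≤ n) (ha : 1 ≤ a)
    (ε : ℝ) (hε : 0 < ε) (hε2 : ε ^ 2 < 1 - 1 / (n : ℝ))
    (hcard : Fintype.card M = a * n)
    (A : Fin n → Finset M)
    (hApart : ∀ i i' : Fin n, i ≠ i' → Disjoint (A i) (A i'))
    (hAcover : ∀ j : M, ∃ i : Fin n, j ∈ A i)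
    (hAcard : ∀ i : Fin n, (A i).card = a)
    (ℓ w vv : Fin n → Finset M → ℝ)
    (hℓ : ∀ (i : Fin n) (S : Finset M),
      ℓ i S = ε + ((S ∩ A i).card : ℝ) / (a : ℝ))
    (hw : ∀ (i : Fin n) (S : Finset M),
      w i S = (1 + ε) * ε + (S.card : ℝ) / ((a : ℝ) * (n : ℝ)))
    (hvv_near : ∀ (i : Fin n) (S : Finset M),
      |((S ∩ A i).card : ℝ) - (S.card : ℝ) / (n : ℝ)| ≤ ε ^ 2 * (a : ℝ) →
        vv i S = w i S)
    (hvv_far : ∀ (i : Fin n) (S : Finset M),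
      ¬ (|((S ∩ A i).card : ℝ) - (S.card : ℝ) / (n : ℝ)| ≤ ε ^ 2 * (a : ℝ)) →
        vv i S = ℓ i S) :
    -- (1) v_i is 2ε-close to the linear valuation ℓ_i
    (∀ (i : Fin n) (S : Finset M),
        ℓ i S ≤ vv i S ∧ vv i S ≤ (1 + 2 * ε) * ℓ i S) ∧
    -- (2) the allocation (A_1,…,A_n) has welfare > n under vv
    ((n : ℝ) < ∑ i : Fin n, vv i (A i)) ∧
    -- (3) every allocation has welfare ≤ (1+ε)·ε·n + 1 under w
    (∀ S : Fin n → Finset M, (∀ i i' : Fin n, i ≠ i' → Disjoint (S i) (S i')) →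
        ∑ i : Fin n, w i (S i) ≤ (1 + ε) * ε * (n : ℝ) + 1) := by

  have hA : (0:ℝ) < (a:ℝ) := by exact_mod_cast Nat.lt_of_lt_of_le Nat.zero_lt_one ha
  have hN : (0:ℝ) < (n:ℝ) := by exact_mod_cast Nat.lt_of_lt_of_le Nat.zero_lt_two hn
  have hAN : (0:ℝ) < (a:ℝ) * (n:ℝ) := mul_pos hA hN
  refine ⟨?_, ?_, ?_⟩
  · intro i S
    by_cases hcase : |((S ∩ A i).card : ℝ) - (S.card : ℝ) / (n : ℝ)| ≤ ε ^ 2 * (a : ℝ)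
    · rw [hvv_near i S hcase, hℓ, hw]
      set x : ℝ := ((S ∩ A i).card : ℝ) with hxdef
      set s : ℝ := ((S.card : ℕ) : ℝ) with hsdef
      have hx0 : 0 ≤ x := by positivity
      obtain ⟨hlo, hhi⟩ := abs_le.mp hcase
      constructor
      · have h1 : x ≤ ε ^ 2 * (a:ℝ) + s / (n:ℝ) := by linarith
        have g1 : x / (a:ℝ) ≤ ε ^ 2 + s / ((a:ℝ) * (n:ℝ)) := by
          calc x / (a:ℝ) ≤ (ε ^ 2 * (a:ℝ) + s / (n:ℝ)) / (a:ℝ) := by gcongr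
            _ = ε ^ 2 + s / ((a:ℝ) * (n:ℝ)) := by field_simp
        nlinarith [g1]
      · have h2 : s / (n:ℝ) ≤ x + ε ^ 2 * (a:ℝ) := by linarith
        have g2 : s / ((a:ℝ) * (n:ℝ)) ≤ x / (a:ℝ) + ε ^ 2 := by
          calc s / ((a:ℝ) * (n:ℝ)) = (s / (n:ℝ)) / (a:ℝ) := by
                rw [div_div]; ring_nf
            _ ≤ (x + ε ^ 2 * (a:ℝ)) / (a:ℝ) := by gcongr
            _ = x / (a:ℝ) + ε ^ 2 := by field_simp
        have hxa : 0 ≤ ε * (x / (a:ℝ)) := by positivity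
        nlinarith [g2, hxa]
    · rw [hvv_far i S hcase, hℓ]
      have h0 : (0:ℝ) ≤ ε + ((S ∩ A i).card : ℝ) / (a:ℝ) := by positivity
      constructor
      · exact le_refl _
      · nlinarith [h0, hε]
  · have hval : ∀ i : Fin n, vv i (A i) = ε + 1 := by
      intro i
      have h1n : (1:ℝ) / (n:ℝ) ≤ 1 := by
        rw [div_le_one hN]
        exact_mod_cast le_trans one_le_two (by exact_mod_cast hn)
      have hfar : ¬ (|(((A i ∩ A i).card : ℕ) : ℝ) - (((A i).card : ℕ) : ℝ) / (n:ℝ)| ≤ ε ^ 2 * (a:ℝ)) := by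
        rw [Finset.inter_self, hAcard, not_le]
        have hdn : (a:ℝ) / (n:ℝ) ≤ (a:ℝ) := by
          rw [div_le_iff₀ hN]
          nlinarith [mul_le_mul_of_nonneg_left (show (1:ℝ) ≤ (n:ℝ) by exact_mod_cast le_trans one_le_two (by exact_mod_cast hn)) hA.le]
        have habs : |(a:ℝ) - (a:ℝ) / (n:ℝ)| = (a:ℝ) * (1 - 1 / (n:ℝ)) := by
          rw [abs_of_nonneg (by linarith)]
          field_simp
        rw [habs]
        nlinarith [mul_pos hA (show (0:ℝ) < 1 - 1 / (n:ℝ) - ε ^ 2 by nlinarith [sq_nonneg ε])]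
      rw [hvv_far i (A i) hfar, hℓ, Finset.inter_self, hAcard]
      field_simp
    have hsum : ∑ i : Fin n, vv i (A i) = (n:ℝ) * (ε + 1) := by
      rw [Finset.sum_congr rfl fun i _ => hval i, Finset.sum_const, Finset.card_univ,
        Fintype.card_fin, nsmul_eq_mul]
    rw [hsum]
    nlinarith [mul_pos hN hε]
  · intro S hS
    have hdisj : ((Finset.univ : Finset (Fin n)).biUnion S).card = ∑ i : Fin n, (S i).card :=
      Finset.card_biUnion (fun i _ j _ hij => hS i j hij)
    have hle : ∑ i : Fin n, (S i).card ≤ a * n := by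
      rw [← hdisj, ← hcard]
      exact Finset.card_le_univ _
    have hcards : ∑ i : Fin n, ((S i).card : ℝ) ≤ (a:ℝ) * (n:ℝ) := by
      push_cast
      exact_mod_cast hle
    have heq : ∑ i : Fin n, w i (S i)
        = (n:ℝ) * ((1 + ε) * ε) + (∑ i : Fin n, ((S i).card : ℝ)) / ((a:ℝ) * (n:ℝ)) := by
      rw [Finset.sum_congr rfl fun i _ => hw i (S i), Finset.sum_add_distrib,
        Finset.sum_const, Finset.card_univ, Fintype.card_fin, nsmul_eq_mul, Finset.sum_div]
    rw [heq]
    have hfrac : (∑ i : Fin n, ((S i).card : ℝ)) / ((a:ℝ) * (n:ℝ)) ≤ 1 := by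
      rw [div_le_one hAN]
      exact hcards
    nlinarith [hfrac]
end
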